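/- arXiv:1610.06270 — 7 statements merged into one kernel-verified Lean document; each statement's English description precedes it below -/
import Mathlib

section
/- For every real α > 2, every real t > 0, and every integer N ≥ 1, ∫_0^∞ (1 − (1 + t r^(−α))^(−N)) r dr = (t^(2/α)/2) · Γ(N + 2/α) · Γ(1 − 2/α) / Γ(N), where Γ is the real Gamma function; that is, the integral equals C_{α,N+1} t^(2/α)/(2π) with C_{α,N+1} := π Γ(N + 2/α) Γ(1 − 2/α)/Γ(N). -/
/-!
The substitution `u = t r^(-α)` turns the integral into `t^δ / α` times the Mellin-type integral
`∫₀^∞ (1 - (1 + u)^(-N)) u^(-δ-1) du`. The telescoping identity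
`1 - (1 + u)^(-N) = ∑_{k<N} u (1 + u)^(-(k+1))` splits the latter into the beta integrals
`B(1 - δ, k + δ) = Γ(1 - δ) Γ(k + δ) / k!`, and `δ ∑_{k<N} Γ(k + δ) / k! = Γ(N + δ) / (N - 1)!`
by induction from `Γ(s + 1) = s Γ(s)`.
-/

open MeasureTheory Real Set

theorem integral_rpow_mul_one_sub_rpow {a b : ℝ} (ha : 0 < a) (hb : 0 < b) :
    ∫ x in (0 : ℝ)..1, x ^ (a - 1) * (1 - x) ^ (b - 1) = Gamma a * Gamma b / Gamma (a + b) := by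
  apply Complex.ofReal_injective
  rw [Complex.ofReal_div, Complex.ofReal_mul, ← Complex.Gamma_ofReal, ← Complex.Gamma_ofReal,
    ← Complex.Gamma_ofReal, Complex.ofReal_add,
    ← Complex.betaIntegral_eq_Gamma_mul_div _ _ (by simpa) (by simpa), Complex.betaIntegral,
    ← intervalIntegral.integral_ofReal]
  refine intervalIntegral.integral_congr fun x hx => ?_
  rw [Set.uIcc_of_le zero_le_one] at hx
  push_cast
  rw [Complex.ofReal_cpow hx.1, Complex.ofReal_cpow (sub_nonneg.2 hx.2)]
  push_cast
  rfl

theorem integral_Ioi_eq_integral_Ioo_comp_div_one_sub (f : ℝ → ℝ) :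
    ∫ x in Ioi (0 : ℝ), f x = ∫ y in Ioo (0 : ℝ) 1, f (y / (1 - y)) / (1 - y) ^ 2 := by
  have himage : (fun y : ℝ => y / (1 - y)) '' Ioo 0 1 = Ioi 0 := by
    refine Subset.antisymm ?_ fun x (hx : 0 < x) => ?_
    · rintro _ ⟨y, ⟨hy0, hy1⟩, rfl⟩
      exact div_pos hy0 (sub_pos.2 hy1)
    · refine ⟨x / (1 + x), ⟨by positivity, (div_lt_one (by positivity)).2 (by linarith)⟩, ?_⟩
      field_simp
      ring
  have hderiv : ∀ y ∈ Ioo (0 : ℝ) 1,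
      HasDerivWithinAt (fun y : ℝ => y / (1 - y)) (1 / (1 - y) ^ 2) (Ioo 0 1) y := by
    intro y hy
    have h := (hasDerivAt_id' y).div ((hasDerivAt_id' y).const_sub 1) (sub_pos.2 hy.2).ne'
    rw [show 1 * (1 - y) - y * -1 = 1 by ring] at h
    exact h.hasDerivWithinAt
  have hinj : InjOn (fun y : ℝ => y / (1 - y)) (Ioo 0 1) := by
    intro y hy z hz hyz
    rw [div_eq_div_iff (sub_pos.2 hy.2).ne' (sub_pos.2 hz.2).ne'] at hyz
    linarith
  rw [← himage, integral_image_eq_integral_abs_deriv_smul measurableSet_Ioo hderiv hinj]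
  refine setIntegral_congr_fun measurableSet_Ioo fun y _ => ?_
  rw [abs_of_nonneg (by positivity), smul_eq_mul, one_div_mul_eq_div]

theorem integral_Ioi_rpow_mul_one_add_rpow_neg {a b : ℝ} (ha : 0 < a) (hb : 0 < b) :
    ∫ x in Ioi (0 : ℝ), x ^ (a - 1) * (1 + x) ^ (-(a + b)) = Gamma a * Gamma b / Gamma (a + b) := by
  have hintegrand : ∀ y ∈ Ioo (0 : ℝ) 1,
      (y / (1 - y)) ^ (a - 1) * (1 + y / (1 - y)) ^ (-(a + b)) / (1 - y) ^ 2
        = y ^ (a - 1) * (1 - y) ^ (b - 1) := by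
    rintro y ⟨hy0, hy1⟩
    have h1y : 0 < 1 - y := sub_pos.2 hy1
    have hinv : 1 + y / (1 - y) = (1 - y)⁻¹ := by field_simp; ring
    have hexp : (1 - y) ^ (b - 1) = (1 - y) ^ (a + b) / (1 - y) ^ (a - 1) / (1 - y) ^ (2 : ℝ) := by
      rw [← rpow_sub h1y, ← rpow_sub h1y]
      ring_nf
    rw [hinv, div_rpow hy0.le h1y.le, inv_rpow h1y.le, ← rpow_neg h1y.le, neg_neg, ← rpow_two, hexp]
    ring
  rw [integral_Ioi_eq_integral_Ioo_comp_div_one_sub,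
    setIntegral_congr_fun measurableSet_Ioo hintegrand,
    ← integral_Ioc_eq_integral_Ioo, ← intervalIntegral.integral_of_le zero_le_one,
    integral_rpow_mul_one_sub_rpow ha hb]

theorem one_sub_one_add_rpow_neg_natCast_eq_sum {u : ℝ} (hu : 1 + u ≠ 0) (N : ℕ) :
    1 - (1 + u) ^ (-(N : ℝ)) = ∑ k ∈ Finset.range N, u * (1 + u) ^ (-((k : ℝ) + 1)) := by
  induction N with
  | zero => simp
  | succ n ih =>
    have hstep : (1 + u) ^ (-(n : ℝ)) = (1 + u) ^ (-((n : ℝ) + 1)) * (1 + u) := by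
      rw [← rpow_add_one hu]
      ring_nf
    rw [Finset.sum_range_succ, ← ih, Nat.cast_succ, hstep]
    ring

theorem mul_sum_range_Gamma_add_div_Gamma_add_one {d : ℝ} (hd : 0 < d) (N : ℕ) :
    d * ∑ k ∈ Finset.range N, Gamma (k + d) / Gamma (k + 1) =
      N * Gamma (N + d) / Gamma (N + 1) := by
  induction N with
  | zero => simp
  | succ n ih =>
    have hGamma : Gamma ((n : ℝ) + 1) ≠ 0 := (Gamma_pos_of_pos (by positivity)).ne'
    rw [Finset.sum_range_succ, mul_add, ih, Nat.cast_succ, add_right_comm (n : ℝ) 1 d,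
      Gamma_add_one (s := n + d) (by positivity), Gamma_add_one (s := n + 1) (by positivity)]
    field_simp

theorem integral_Ioi_comp_mul_left_mul_rpow (f : ℝ → ℝ) {t : ℝ} (ht : 0 < t) (s : ℝ) :
    ∫ v in Ioi (0 : ℝ), f (t * v) * v ^ s = t ^ (-s - 1) * ∫ u in Ioi (0 : ℝ), f u * u ^ s := by
  have hscale : ∀ v ∈ Ioi (0 : ℝ), f (t * v) * v ^ s = t ^ (-s) * (f (t * v) * (t * v) ^ s) := by
    intro v hv
    rw [mul_rpow ht.le (le_of_lt hv), rpow_neg ht.le]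
    field_simp
  rw [setIntegral_congr_fun measurableSet_Ioi hscale, integral_const_mul,
    integral_comp_mul_left_Ioi (fun u => f u * u ^ s) 0 ht, mul_zero, smul_eq_mul, ← mul_assoc,
    rpow_sub_one ht.ne', div_eq_mul_inv]

theorem integral_Ioi_comp_rpow_mul_self (g : ℝ → ℝ) {p : ℝ} (hp : p ≠ 0) :
    ∫ x in Ioi (0 : ℝ), g (x ^ p) * x = |p|⁻¹ * ∫ v in Ioi (0 : ℝ), g v * v ^ (2 / p - 1) := by
  rw [← integral_comp_rpow_Ioi (fun v => g v * v ^ (2 / p - 1)) hp, ← integral_const_mul]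
  refine setIntegral_congr_fun measurableSet_Ioi fun x (hx : 0 < x) => ?_
  have hpow : x ^ (p - 1) * (x ^ p) ^ (2 / p - 1) = x := by
    rw [← rpow_mul hx.le, ← rpow_add hx]
    field_simp
    ring_nf
    exact rpow_one x
  rw [smul_eq_mul, show |p| * x ^ (p - 1) * (g (x ^ p) * (x ^ p) ^ (2 / p - 1))
    = |p| * (g (x ^ p) * (x ^ (p - 1) * (x ^ p) ^ (2 / p - 1))) by ring, hpow,
    inv_mul_cancel_left₀ (abs_ne_zero.2 hp)]

theorem integral_Ioi_one_sub_one_add_rpow_neg_mul_rpow {d : ℝ} (hd0 : 0 < d) (hd1 : d < 1) (N : ℕ) :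
    ∫ u in Ioi (0 : ℝ), (1 - (1 + u) ^ (-(N : ℝ))) * u ^ (-d - 1)
      = Gamma (1 - d) * (N * Gamma (N + d) / Gamma (N + 1)) / d := by
  have hbeta (k : ℕ) : ∫ u in Ioi (0 : ℝ), u ^ ((1 - d) - 1) * (1 + u) ^ (-((1 - d) + (k + d)))
      = Gamma (1 - d) * (Gamma (k + d) / Gamma (k + 1)) := by
    rw [integral_Ioi_rpow_mul_one_add_rpow_neg (by linarith) (by positivity)]
    ring_nf
  have hsplit : ∀ u ∈ Ioi (0 : ℝ), (1 - (1 + u) ^ (-(N : ℝ))) * u ^ (-d - 1)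
      = ∑ k ∈ Finset.range N, u ^ ((1 - d) - 1) * (1 + u) ^ (-((1 - d) + (k + d))) := by
    intro u (hu : 0 < u)
    rw [one_sub_one_add_rpow_neg_natCast_eq_sum (by positivity), Finset.sum_mul]
    refine Finset.sum_congr rfl fun k _ => ?_
    rw [rpow_sub_one hu.ne']
    field_simp
    ring_nf
  -- Each summand is integrable because its integral, a beta value, is nonzero.
  rw [setIntegral_congr_fun measurableSet_Ioi hsplit, integral_finsetSum _ fun k _ =>
      Integrable.of_integral_ne_zero (by rw [hbeta]; positivity),
    Finset.sum_congr rfl fun k _ => hbeta k, ← Finset.mul_sum,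
    ← mul_sum_range_Gamma_add_div_Gamma_add_one hd0]
  field_simp

/-- The radial integral identity for Gamma fading gains: for `α > 2`, `t > 0`, `N ≥ 1`,
`∫_0^∞ (1 - (1 + t r^(-α))^(-N)) r dr = (t^(2/α)/2) Γ(N + 2/α) Γ(1 - 2/α)/Γ(N)`. -/
theorem radial_integral_C_alpha_N (α t : ℝ) (hα : 2 < α) (ht : 0 < t)
    (N : ℕ) (hN : 1 ≤ N) :
    (∫ r in Set.Ioi (0 : ℝ), (1 - (1 + t * r ^ (-α)) ^ (-(N : ℝ))) * r) =
      t ^ (2 / α) / 2 * Real.Gamma ((N : ℝ) + 2 / α) * Real.Gamma (1 - 2 / α) /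
        Real.Gamma (N : ℝ) := by
  have hα0 : 0 < α := by linarith
  have hδ0 : 0 < 2 / α := by positivity
  have hδ1 : 2 / α < 1 := (div_lt_one hα0).2 hα
  have hN0 : (N : ℝ) ≠ 0 := Nat.cast_ne_zero.2 (Nat.one_le_iff_ne_zero.1 hN)
  rw [integral_Ioi_comp_rpow_mul_self (fun v => 1 - (1 + t * v) ^ (-(N : ℝ))) (by linarith),
    integral_Ioi_comp_mul_left_mul_rpow (fun u => 1 - (1 + u) ^ (-(N : ℝ))) ht, div_neg,
    integral_Ioi_one_sub_one_add_rpow_neg_mul_rpow hδ0 hδ1, abs_neg, abs_of_pos hα0,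
    Gamma_add_one hN0]
  field_simp
  ring_nf
end

section
/- Let 0 < δ < 1 and c > 0 be reals. For every integer m ≥ 1 and every real s > 0, (−1)^m · s^m · (d^m/ds^m) e^(−c s^δ) = e^(−c s^δ) · Σ_{n=1}^{m} (δ c s^δ)^n · Υ_{m,n}. -/
/-!
Differentiating `e^(-c x^δ) x^a` gives `e^(-c x^δ) (a x^(a-1) - δ c x^(a+δ-1))`, so by induction
`(-1)ᵐ (d/dx)ᵐ e^(-c x^δ) = e^(-c x^δ) ∑ₙ (δ c)ⁿ Υ_{m,n} x^(δ n - m)` for any coefficients obeying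
`Υ_{m+1,n} = (m - δ n) Υ_{m,n} + Υ_{m,n-1}`, `Υ_{m,m} = 1`, `Υ_{m,0} = 0`. The subset sum satisfies
this recursion: split the subsets `ψ ⊆ {1, …, m}` of size `m + 1 - n` according to whether `m ∈ ψ`;
if so, `m` is the last of the `m - n + 1` elements of `ψ` and contributes the factor `m - δ n`.
-/

open Real Finset

/-- `Υ_{m,n} = ∑_{ψ ⊆ {1,…,m-1}, |ψ| = m-n} ∏_{i=1}^{m-n} (l_i - δ(l_i - i + 1))`,
where `l_1 < l_2 < ⋯ < l_{m-n}` enumerate the elements of `ψ` in increasing order.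
(Here the product is written with `0`-based index `j = i - 1`, so that the `i`-th
factor `l_i - δ(l_i - i + 1)` becomes `l - δ(l - j)` with `l` the `j`-th smallest
element of `ψ`.) -/
noncomputable def Upsilon (δ : ℝ) (m n : ℕ) : ℝ :=
  ∑ ψ ∈ Finset.powersetCard (m - n) (Finset.Icc 1 (m - 1)),
    ∏ j ∈ Finset.range (m - n),
      (((ψ.sort (· ≤ ·)).getD j 0 : ℝ) - δ * (((ψ.sort (· ≤ ·)).getD j 0 : ℝ) - (j : ℝ)))

theorem Finset.sort_insert_of_forall_lt {α : Type*} [LinearOrder α] {a : α} {s : Finset α}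
    (h : ∀ b ∈ s, b < a) : (insert a s).sort (· ≤ ·) = s.sort (· ≤ ·) ++ [a] := by
  have hnodup : (s.sort (· ≤ ·) ++ [a]).Nodup :=
    List.nodup_append.2 ⟨s.sort_nodup _, List.nodup_singleton a, by
      simpa using fun b hb hba => (h b hb).ne hba⟩
  have hpair : (s.sort (· ≤ ·) ++ [a]).Pairwise (· ≤ ·) :=
    List.pairwise_append.2 ⟨s.pairwise_sort _, List.pairwise_singleton _ a, by
      simpa using fun b hb => (h b hb).le⟩
  conv_lhs => rw [show insert a s = (s.sort (· ≤ ·) ++ [a]).toFinset by ext; simp]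
  exact (List.toFinset_sort _ hnodup).2 hpair

theorem Finset.sum_Icc_one_eq_sum_range {M : Type*} [AddCommMonoid M] (f : ℕ → M) (m : ℕ) :
    ∑ n ∈ Icc 1 m, f n = ∑ k ∈ range m, f (k + 1) := by
  rw [range_eq_Ico, sum_Ico_add' f 0 m 1, zero_add, Ico_add_one_right_eq_Icc]

noncomputable def upsilonTerm (δ : ℝ) (ψ : Finset ℕ) : ℝ :=
  ∏ j ∈ range #ψ,
    (((ψ.sort (· ≤ ·)).getD j 0 : ℝ) - δ * (((ψ.sort (· ≤ ·)).getD j 0 : ℝ) - (j : ℝ)))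

section Upsilon

variable (δ : ℝ)

theorem upsilon_eq_sum_upsilonTerm (m n : ℕ) :
    Upsilon δ m n = ∑ ψ ∈ powersetCard (m - n) (Icc 1 (m - 1)), upsilonTerm δ ψ :=
  sum_congr rfl fun ψ hψ => by rw [upsilonTerm, (mem_powersetCard.1 hψ).2]

theorem upsilonTerm_insert_of_forall_lt {a : ℕ} {ψ : Finset ℕ} (h : ∀ b ∈ ψ, b < a) :
    upsilonTerm δ (insert a ψ) = (a - δ * (a - #ψ)) * upsilonTerm δ ψ := by
  have ha : a ∉ ψ := fun ha => (h a ha).false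
  have hlen : (ψ.sort (· ≤ ·)).length = #ψ := length_sort _
  rw [upsilonTerm, upsilonTerm, card_insert_of_notMem ha, prod_range_succ, mul_comm,
    sort_insert_of_forall_lt h, List.getD_append_right _ _ _ _ hlen.le, hlen, Nat.sub_self]
  congr 1
  exact prod_congr rfl fun j hj => by
    rw [List.getD_append _ _ _ _ (hlen ▸ mem_range.1 hj)]

theorem upsilon_self (m : ℕ) : Upsilon δ m m = 1 := by
  simp [Upsilon]

theorem upsilon_zero {m : ℕ} (hm : m ≠ 0) : Upsilon δ m 0 = 0 := by
  rw [Upsilon, powersetCard_eq_empty.2 (by rw [Nat.card_Icc]; omega), sum_empty]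

theorem upsilon_succ_succ {m k : ℕ} (hk : k < m) :
    Upsilon δ (m + 1) (k + 1) = (m - δ * (k + 1)) * Upsilon δ m (k + 1) + Upsilon δ m k := by
  obtain ⟨j, hj⟩ : ∃ j, m - k = j + 1 := ⟨m - (k + 1), by omega⟩
  have hIcc : Icc 1 m = insert m (Icc 1 (m - 1)) := by
    ext x; simp only [mem_Icc, mem_insert]; omega
  have hm : m ∉ Icc 1 (m - 1) := by rw [mem_Icc]; omega
  have hdisj : Disjoint (powersetCard (j + 1) (Icc 1 (m - 1)))
      ((powersetCard j (Icc 1 (m - 1))).image (insert m)) := by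
    refine disjoint_left.2 fun ψ hψ hψ' => ?_
    obtain ⟨t, -, rfl⟩ := mem_image.1 hψ'
    exact hm ((mem_powersetCard.1 hψ).1 (mem_insert_self m t))
  have hinj : Set.InjOn (insert m) (powersetCard j (Icc 1 (m - 1)) : Set (Finset ℕ)) :=
    fun t ht t' ht' htt' =>
      (erase_insert fun h => hm ((mem_powersetCard.1 ht).1 h)).symm.trans
        ((congrArg (·.erase m) htt').trans (erase_insert fun h => hm ((mem_powersetCard.1 ht').1 h)))
  have hterm : ∀ ψ ∈ powersetCard j (Icc 1 (m - 1)),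
      upsilonTerm δ (insert m ψ) = (m - δ * (k + 1)) * upsilonTerm δ ψ := by
    intro ψ hψ
    obtain ⟨hsub, hcard⟩ := mem_powersetCard.1 hψ
    rw [upsilonTerm_insert_of_forall_lt δ fun b hb => by have := mem_Icc.1 (hsub hb); omega,
      hcard]
    congr 2
    rw [show m = j + (k + 1) by omega]
    push_cast; ring
  rw [upsilon_eq_sum_upsilonTerm, upsilon_eq_sum_upsilonTerm, upsilon_eq_sum_upsilonTerm,
    show m + 1 - (k + 1) = j + 1 by omega, show m - (k + 1) = j by omega, hj, Nat.add_sub_cancel,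
    hIcc, powersetCard_succ_insert hm, sum_union hdisj, sum_image hinj, sum_congr rfl hterm,
    ← mul_sum, add_comm]

theorem sum_range_upsilon_succ {m : ℕ} (hm : m ≠ 0) (g : ℕ → ℝ) :
    ∑ k ∈ range (m + 1), Upsilon δ (m + 1) (k + 1) * g (k + 1) =
      ∑ k ∈ range m, Upsilon δ m (k + 1) * ((m - δ * (k + 1)) * g (k + 1) + g (k + 2)) := by
  have hshift : ∑ k ∈ range m, Upsilon δ m k * g (k + 1) + g (m + 1) =
      ∑ k ∈ range m, Upsilon δ m (k + 1) * g (k + 2) := by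
    have h := (sum_range_succ (fun k => Upsilon δ m k * g (k + 1)) m).symm.trans
      (sum_range_succ' (fun k => Upsilon δ m k * g (k + 1)) m)
    rwa [upsilon_self, one_mul, upsilon_zero δ hm, zero_mul, add_zero] at h
  rw [sum_range_succ, upsilon_self, one_mul, sum_congr rfl fun k hk =>
    by rw [upsilon_succ_succ δ (mem_range.1 hk)]]
  simp only [add_mul, sum_add_distrib]
  rw [add_assoc, hshift, ← sum_add_distrib]
  exact sum_congr rfl fun k _ => by ring

end Upsilon

section ExpNegRpow

variable (δ c : ℝ) {s : ℝ}

theorem hasDerivAt_exp_neg_mul_rpow (hs : 0 < s) :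
    HasDerivAt (fun x : ℝ => exp (-(c * x ^ δ))) (-(δ * c) * exp (-(c * s ^ δ)) * s ^ (δ - 1)) s :=
  (((hasDerivAt_rpow_const (Or.inl hs.ne')).const_mul c).fun_neg.exp).congr_deriv (by ring)

theorem hasDerivAt_exp_neg_mul_rpow_mul_rpow (a : ℝ) (hs : 0 < s) :
    HasDerivAt (fun x : ℝ => exp (-(c * x ^ δ)) * x ^ a)
      (exp (-(c * s ^ δ)) * (a * s ^ (a - 1) - δ * c * s ^ (a + δ - 1))) s := by
  refine ((hasDerivAt_exp_neg_mul_rpow δ c hs).fun_mul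
    (hasDerivAt_rpow_const (Or.inl hs.ne'))).congr_deriv ?_
  rw [show a + δ - 1 = (δ - 1) + a by ring, rpow_add hs]
  ring

/-- Indexed by `k = n - 1`, so that the index shifts `n ↦ n ± 1` become `sum_range_succ` and
`sum_range_succ'`. -/
noncomputable def upsilonSum (m : ℕ) (x : ℝ) : ℝ :=
  ∑ k ∈ range m, (δ * c) ^ (k + 1) * Upsilon δ m (k + 1) *
    (exp (-(c * x ^ δ)) * x ^ (δ * (k + 1) - m))

theorem hasDerivAt_upsilonSum {m : ℕ} (hm : m ≠ 0) (hs : 0 < s) :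
    HasDerivAt (upsilonSum δ c m) (-upsilonSum δ c (m + 1) s) s := by
  unfold upsilonSum
  refine (HasDerivAt.fun_sum fun (k : ℕ) _ =>
    (hasDerivAt_exp_neg_mul_rpow_mul_rpow δ c (δ * (k + 1) - m) hs).const_mul
      ((δ * c) ^ (k + 1) * Upsilon δ m (k + 1))).congr_deriv ?_
  set g : ℕ → ℝ := fun n => (δ * c) ^ n * (exp (-(c * s ^ δ)) * s ^ (δ * n - (m + 1))) with hg
  calc _ = -∑ k ∈ range m, Upsilon δ m (k + 1) * ((m - δ * (k + 1)) * g (k + 1) + g (k + 2)) := by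
        rw [← sum_neg_distrib]
        refine sum_congr rfl fun k _ => ?_
        simp only [hg]
        push_cast
        rw [show δ * (k + 1) - m - 1 = δ * (k + 1) - (m + 1) by ring,
          show δ * (k + 1) - m + δ - 1 = δ * (k + 2) - (m + 1) by ring]
        ring
    _ = _ := by
        rw [← sum_range_upsilon_succ δ hm g]
        refine congrArg _ (sum_congr rfl fun k _ => ?_)
        simp only [hg]
        push_cast
        ring

theorem iteratedDeriv_exp_neg_mul_rpow_eqOn {m : ℕ} (hm : 1 ≤ m) :
    Set.EqOn (iteratedDeriv m fun x : ℝ => exp (-(c * x ^ δ)))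
      (fun x => (-1) ^ m * upsilonSum δ c m x) (Set.Ioi 0) := by
  induction m, hm using Nat.le_induction with
  | base =>
    intro x hx
    rw [iteratedDeriv_one, (hasDerivAt_exp_neg_mul_rpow δ c hx).deriv]
    simp only [upsilonSum, range_one, sum_singleton, upsilon_self, Nat.cast_zero, Nat.cast_one,
      zero_add, pow_one, mul_one]
    ring
  | succ m hm ih =>
    intro x hx
    rw [iteratedDeriv_succ, (ih.eventuallyEq_of_mem (Ioi_mem_nhds hx)).deriv_eq,
      ((hasDerivAt_upsilonSum δ c (by omega) hx).const_mul _).deriv]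
    ring

end ExpNegRpow

theorem iteratedDeriv_exp_neg_rpow_general (δ c : ℝ)
    (m : ℕ) (hm : 1 ≤ m) (s : ℝ) (hs : 0 < s) :
    (-1 : ℝ) ^ m * s ^ m * iteratedDeriv m (fun x : ℝ => Real.exp (-(c * x ^ δ))) s =
      Real.exp (-(c * s ^ δ)) *
        ∑ n ∈ Finset.Icc 1 m, (δ * c * s ^ δ) ^ n * Upsilon δ m n := by
  have hpow (k : ℕ) : s ^ m * s ^ (δ * (k + 1) - m) = (s ^ δ) ^ (k + 1) := by
    rw [← rpow_natCast, ← rpow_natCast, ← rpow_add hs, ← rpow_mul hs.le]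
    push_cast
    congr 1
    ring
  rw [iteratedDeriv_exp_neg_mul_rpow_eqOn δ c hm hs, mul_mul_mul_comm,
    ← mul_pow, neg_one_mul, neg_neg, one_pow, one_mul, upsilonSum, sum_Icc_one_eq_sum_range,
    mul_sum, mul_sum]
  refine sum_congr rfl fun k _ => ?_
  rw [mul_pow, mul_pow, ← hpow k]
  ring

/-- Closed form for the higher derivatives of `s ↦ e^(-c s^δ)`: for `0 < δ < 1`, `c > 0`,
`m ≥ 1` and `s > 0`,
`(-1)^m s^m (d^m/ds^m) e^(-c s^δ) = e^(-c s^δ) ∑_{n=1}^m (δ c s^δ)^n Υ_{m,n}`. -/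
theorem iteratedDeriv_exp_neg_rpow (δ c : ℝ) (hδ0 : 0 < δ) (hδ1 : δ < 1) (hc : 0 < c)
    (m : ℕ) (hm : 1 ≤ m) (s : ℝ) (hs : 0 < s) :
    (-1 : ℝ) ^ m * s ^ m * iteratedDeriv m (fun x : ℝ => Real.exp (-(c * x ^ δ))) s =
      Real.exp (-(c * s ^ δ)) *
        ∑ n ∈ Finset.Icc 1 m, (δ * c * s ^ δ) ^ n * Upsilon δ m n :=
  iteratedDeriv_exp_neg_rpow_general δ c m hm s hs
end

section
/- Let 0 < δ < 1 and b > 0 be reals and M ≥ 0 an integer. Define P(Λ) := e^(−Λb) · (1 + Σ_{m=1}^{M} (1/m!) Σ_{n=1}^{m} (δΛb)^n Υ_{m,n}) for Λ ∈ ℝ. Then P(0) = 1 and P is differentiable at 0 with P′(0) = −b · K_{δ,M+1}, where K_{δ,N} := 1 + Σ_{m=1}^{N−1} (1/m!) ∏_{l=0}^{m−1} (l − δ). -/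
open Real Finset

theorem Finset.sort_Icc_eq_range' (a b : ℕ) :
    (Finset.Icc a b).sort (· ≤ ·) = List.range' a (b + 1 - a) := by
  apply List.Perm.eq_of_sortedLE (Finset.pairwise_sort _ _).sortedLE
    ((List.pairwise_le_range' (s := a) (n := b + 1 - a)).imp (by simp)).sortedLE
  rw [← Multiset.coe_eq_coe, Finset.sort_eq, Nat.Icc_eq_range']

/-- For `n = 1` the only admissible `ψ` is `{1, …, m-1}` itself, with `l_i = i`. -/
theorem Upsilon_one (δ : ℝ) (m : ℕ) :
    Upsilon δ m 1 = ∏ j ∈ Finset.range (m - 1), ((j : ℝ) + 1 - δ) := by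
  have hψ := Finset.powersetCard_self (Finset.Icc 1 (m - 1))
  rw [Nat.card_Icc, Nat.add_sub_cancel] at hψ
  rw [Upsilon, hψ, Finset.sum_singleton]
  refine Finset.prod_congr rfl fun j hj => ?_
  rw [Finset.mem_range] at hj
  rw [Finset.sort_Icc_eq_range', List.getD_eq_getElem _ _ (by simp; omega), List.getElem_range']
  push_cast
  ring

theorem mul_Upsilon_one (δ : ℝ) {m : ℕ} (hm : 1 ≤ m) :
    δ * Upsilon δ m 1 = -∏ l ∈ Finset.range m, ((l : ℝ) - δ) := by
  obtain ⟨k, rfl⟩ := Nat.exists_eq_add_of_le' hm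
  rw [Upsilon_one, Nat.add_sub_cancel, Finset.prod_range_succ']
  push_cast
  simp only [add_sub_right_comm]
  ring

theorem HasDerivAt.sum_Icc_one_pow_mul {𝕜 : Type*} [NontriviallyNormedField 𝕜] {f : 𝕜 → 𝕜}
    {f' x : 𝕜} (hf : HasDerivAt f f' x) (hfx : f x = 0) (a : ℕ → 𝕜) {m : ℕ} (hm : 1 ≤ m) :
    HasDerivAt (fun y => ∑ n ∈ Finset.Icc 1 m, f y ^ n * a n) (f' * a 1) x := by
  refine (HasDerivAt.fun_sum fun n _ => (hf.pow n).mul_const (a n)).congr_deriv ?_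
  rw [Finset.sum_eq_single_of_mem 1 (Finset.mem_Icc.2 ⟨le_rfl, hm⟩)]
  · simp
  · intro n hn hn1
    rw [hfx, zero_pow (by grind)]
    simp

theorem Finset.sum_Icc_one_zero_pow_mul {R : Type*} [Semiring R] (a : ℕ → R) (m : ℕ) :
    ∑ n ∈ Finset.Icc 1 m, (0 : R) ^ n * a n = 0 :=
  Finset.sum_eq_zero fun n hn => by
    rw [zero_pow (by grind), zero_mul]

theorem taylor_expansion_connection_probability_general
    (δ b : ℝ) (M : ℕ)
    (P : ℝ → ℝ)
    (hP : ∀ Λ : ℝ, P Λ = Real.exp (-(Λ * b)) *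
      (1 + ∑ m ∈ Finset.Icc 1 M, (1 / (Nat.factorial m : ℝ)) *
        ∑ n ∈ Finset.Icc 1 m, (δ * Λ * b) ^ n * Upsilon δ m n)) :
    P 0 = 1 ∧
    HasDerivAt P
      (-(b * (1 + ∑ m ∈ Finset.Icc 1 M, (1 / (Nat.factorial m : ℝ)) *
        ∏ l ∈ Finset.range m, ((l : ℝ) - δ)))) 0 := by
  have hexp : HasDerivAt (fun Λ : ℝ => Real.exp (-(Λ * b))) (-b) 0 := by
    simpa using ((hasDerivAt_id (0 : ℝ)).mul_const b).neg.exp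
  have hlin : HasDerivAt (fun Λ : ℝ => δ * Λ * b) (δ * b) 0 := by
    simpa using ((hasDerivAt_id (0 : ℝ)).const_mul δ).mul_const b
  have hpoly : HasDerivAt
      (fun Λ : ℝ => 1 + ∑ m ∈ Finset.Icc 1 M, (1 / (Nat.factorial m : ℝ)) *
        ∑ n ∈ Finset.Icc 1 m, (δ * Λ * b) ^ n * Upsilon δ m n)
      (∑ m ∈ Finset.Icc 1 M, (1 / (Nat.factorial m : ℝ)) * (δ * b * Upsilon δ m 1)) 0 :=
    (HasDerivAt.fun_sum fun m hm => ((hlin.sum_Icc_one_pow_mul (by simp) (Upsilon δ m)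
      (Finset.mem_Icc.1 hm).1).const_mul _)).const_add 1
  rw [show P = _ from funext hP]
  refine ⟨by simp [Finset.sum_Icc_one_zero_pow_mul], (hexp.mul hpoly).congr_deriv ?_⟩
  have hK : ∀ m ∈ Finset.Icc 1 M, (1 / (Nat.factorial m : ℝ)) * (δ * b * Upsilon δ m 1) =
      -b * ((1 / (Nat.factorial m : ℝ)) * ∏ l ∈ Finset.range m, ((l : ℝ) - δ)) := fun m hm => by
    rw [mul_right_comm, mul_Upsilon_one δ (Finset.mem_Icc.1 hm).1]
    ring
  rw [Finset.sum_congr rfl hK, ← Finset.mul_sum]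
  simp only [mul_zero, zero_mul, Finset.sum_Icc_one_zero_pow_mul, neg_zero, Real.exp_zero,
    Finset.sum_const_zero]
  ring

/-- First-order Taylor expansion of
`P(Λ) = e^(-Λb)(1 + ∑_{m=1}^M (1/m!) ∑_{n=1}^m (δΛb)^n Υ_{m,n})` around `Λ = 0`:
`P(0) = 1` and `P'(0) = -b K_{δ,M+1}` where
`K_{δ,N} = 1 + ∑_{m=1}^{N-1} (1/m!) ∏_{l=0}^{m-1} (l - δ)`. -/
theorem taylor_expansion_connection_probability
    (δ b : ℝ) (hδ0 : 0 < δ) (hδ1 : δ < 1) (hb : 0 < b) (M : ℕ)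
    (P : ℝ → ℝ)
    (hP : ∀ Λ : ℝ, P Λ = Real.exp (-(Λ * b)) *
      (1 + ∑ m ∈ Finset.Icc 1 M, (1 / (Nat.factorial m : ℝ)) *
        ∑ n ∈ Finset.Icc 1 m, (δ * Λ * b) ^ n * Upsilon δ m n)) :
    P 0 = 1 ∧
    HasDerivAt P
      (-(b * (1 + ∑ m ∈ Finset.Icc 1 M, (1 / (Nat.factorial m : ℝ)) *
        ∏ l ∈ Finset.range m, ((l : ℝ) - δ)))) 0 :=
  taylor_expansion_connection_probability_general δ b M P hP
end

section
/- With α > 2, δ := 2/α, X, Y, Z > 0 satisfying (X/Z)^(2/α) > Y, and λ^L := 1/((X/Z)^(2/α) − Y): one has f₁(λ^L) = f₂(λ^L), and the derivative of F at λ^L equals (f₁(λ^L) − 1)/(δ · f₁(λ^L) · (1 + λ^L Y)), which is strictly positive. -/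
open Real

/-!
At `λ^L` one has `1 + Yλ^L = (X/Z)^(2/α) λ^L`, and raising this to the power `-α/2` gives
`X (1 + Yλ^L)^(-α/2) = Z (λ^L)^(-α/2)`, i.e. `f₁ = f₂`. Hence the term `ln (f₁/f₂)` of `F'`
vanishes there and `F'(λ^L) = λ^L (f₁' - f₂')/f₁`. Both `f₁ - 1` and `f₂ - 1` equal the same
`E > 0` at `λ^L`, and `f₁' = -(α/2) Y E/(1 + Yλ^L)`, `f₂' = -(α/2) E/λ^L`, so the difference
collapses to `(α/2) E/(λ^L (1 + Yλ^L))`.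
-/

theorem HasDerivAt.mul_log_div_of_eq {g₁ g₂ : ℝ → ℝ} {g₁' g₂' x : ℝ}
    (h₁ : HasDerivAt g₁ g₁' x) (h₂ : HasDerivAt g₂ g₂' x)
    (heq : g₁ x = g₂ x) (hne : g₁ x ≠ 0) :
    HasDerivAt (fun l => l * Real.log (g₁ l / g₂ l)) (x * (g₁' - g₂') / g₁ x) x := by
  have hq_one : g₁ x / g₂ x = 1 := by rw [heq, div_self (heq ▸ hne)]
  have hlog := (h₁.div h₂ (heq ▸ hne)).log (by rw [Pi.div_apply, hq_one]; exact one_ne_zero)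
  refine ((hasDerivAt_id x).mul hlog).congr_deriv ?_
  rw [Pi.div_apply, hq_one, ← heq, Real.log_one, id]
  field_simp
  ring

theorem hasDerivAt_one_add_mul_rpow_affine {a b c p x : ℝ} (hx : a + b * x ≠ 0) :
    HasDerivAt (fun l => 1 + c * (a + b * l) ^ p)
      (p * b * (c * (a + b * x) ^ p) / (a + b * x)) x := by
  have hlin : HasDerivAt (fun l => a + b * l) b x := by
    simpa using ((hasDerivAt_id x).const_mul b).const_add a
  refine (((hlin.rpow_const (p := p) (Or.inl hx)).const_mul c).const_add 1).congr_deriv ?_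
  rw [rpow_sub_one hx]
  ring

theorem mul_rpow_neg_half_of_scaled {α X Z l : ℝ} (hα : α ≠ 0) (hX : 0 < X) (hZ : 0 < Z)
    (hl : 0 < l) :
    X * ((X / Z) ^ (2 / α) * l) ^ (-(α / 2)) = Z * l ^ (-(α / 2)) := by
  have hXZ : 0 < X / Z := div_pos hX hZ
  have hscale : ((X / Z) ^ (2 / α)) ^ (-(α / 2)) = Z / X := by
    rw [← rpow_mul hXZ.le, show 2 / α * -(α / 2) = -1 by field_simp, rpow_neg_one, inv_div]
  rw [mul_rpow (rpow_pos_of_pos hXZ _).le hl.le, hscale]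
  field_simp

theorem F_deriv_at_lower_boundary_general (α X Y Z : ℝ) (hα : 2 < α)
    (hX : 0 < X) (hZ : 0 < Z)
    (hcond : (X / Z) ^ (2 / α) > Y)
    (lL : ℝ) (hlL : lL = 1 / ((X / Z) ^ (2 / α) - Y))
    (f₁ f₂ F : ℝ → ℝ)
    (hf₁ : ∀ l : ℝ, f₁ l = 1 + X * (1 + Y * l) ^ (-(α / 2)))
    (hf₂ : ∀ l : ℝ, f₂ l = 1 + Z * l ^ (-(α / 2)))
    (hF : ∀ l : ℝ, F l = l * Real.log (f₁ l / f₂ l)) :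
    f₁ lL = f₂ lL ∧
    HasDerivAt F ((f₁ lL - 1) / ((2 / α) * f₁ lL * (1 + lL * Y))) lL ∧
    0 < (f₁ lL - 1) / ((2 / α) * f₁ lL * (1 + lL * Y)) := by
  have hscaled : 1 + Y * lL = (X / Z) ^ (2 / α) * lL := by
    rw [hlL]; field_simp [(sub_pos.mpr hcond).ne']; ring
  replace hlL : 0 < lL := by rw [hlL]; exact one_div_pos.mpr (sub_pos.mpr hcond)
  have hYl : 0 < 1 + Y * lL := by rw [hscaled]; positivity
  have hcross : X * (1 + Y * lL) ^ (-(α / 2)) = Z * lL ^ (-(α / 2)) := by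
    rw [hscaled]; exact mul_rpow_neg_half_of_scaled (by linarith) hX hZ hlL
  have heq : f₁ lL = f₂ lL := by rw [hf₁, hf₂, hcross]
  have hd₁ : HasDerivAt f₁ _ lL :=
    (funext hf₁ ▸ hasDerivAt_one_add_mul_rpow_affine (c := X) hYl.ne')
  have hd₂ : HasDerivAt f₂ (-(α / 2) * (Z * lL ^ (-(α / 2))) / lL) lL := by
    simpa [funext hf₂] using
      hasDerivAt_one_add_mul_rpow_affine (a := 0) (b := 1) (c := Z) (p := -(α / 2))
        (x := lL) (by simpa using hlL.ne')
  refine ⟨heq, ?_, ?_⟩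
  · convert funext hF ▸ hd₁.mul_log_div_of_eq hd₂ heq (by rw [hf₁]; positivity) using 1
    rw [hf₁, ← hcross]
    field_simp
    ring
  · rw [hf₁, add_sub_cancel_left]
    have hlY : 0 < 1 + lL * Y := by rwa [mul_comm lL]
    positivity

/-- Boundary evaluation in Appendix E of the paper: with `δ = 2/α`,
`f₁(λ) = 1 + X(1+Yλ)^(-α/2)`, `f₂(λ) = 1 + Zλ^(-α/2)`, `F(λ) = λ ln(f₁(λ)/f₂(λ))`,
and `λ^L = 1/((X/Z)^(2/α) - Y)` (assuming `(X/Z)^(2/α) > Y`):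
one has `f₁(λ^L) = f₂(λ^L)` and `F'(λ^L) = (f₁(λ^L)-1)/(δ f₁(λ^L)(1+λ^L Y)) > 0`. -/
theorem F_deriv_at_lower_boundary (α X Y Z : ℝ) (hα : 2 < α)
    (hX : 0 < X) (hY : 0 < Y) (hZ : 0 < Z)
    (hcond : (X / Z) ^ (2 / α) > Y)
    (lL : ℝ) (hlL : lL = 1 / ((X / Z) ^ (2 / α) - Y))
    (f₁ f₂ F : ℝ → ℝ)
    (hf₁ : ∀ l : ℝ, f₁ l = 1 + X * (1 + Y * l) ^ (-(α / 2)))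
    (hf₂ : ∀ l : ℝ, f₂ l = 1 + Z * l ^ (-(α / 2)))
    (hF : ∀ l : ℝ, F l = l * Real.log (f₁ l / f₂ l)) :
    f₁ lL = f₂ lL ∧
    HasDerivAt F ((f₁ lL - 1) / ((2 / α) * f₁ lL * (1 + lL * Y))) lL ∧
    0 < (f₁ lL - 1) / ((2 / α) * f₁ lL * (1 + lL * Y)) :=
  F_deriv_at_lower_boundary_general α X Y Z hα hX hZ hcond lL hlL f₁ f₂ F hf₁ hf₂ hF
end

section
/- With α > 2, δ := 2/α and X, Y, Z > 0: lim_{λ→∞} λ^(α/2) · F′(λ) = ((α − 2)/2) · (Z − X Y^(−α/2)). In particular, if X > Z Y^(α/2), this limit is strictly negative, and hence F′(λ) < 0 for all sufficiently large λ. -/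
/-!
Write `p = α / 2`. For large `λ` both `f₁` and `f₂` have the shape `1 + c (a + bλ)^(-p)` with
`b > 0`, so `F = G_{X,1,Y} - G_{Z,0,1}` where `G_{c,a,b}(λ) = λ log (1 + c (a + bλ)^(-p))`.
Since `(a + bλ)^(-p) ∼ b^(-p) λ^(-p)` and `log (1 + u) ∼ u`, the term
`λ^p log (1 + c (a + bλ)^(-p))` tends to `c b^(-p)`, while `λ^(p+1)` times the logarithmic
derivative of `1 + c (a + bλ)^(-p)` tends to `-p c b^(-p)`. Hence
`λ^p G'_{c,a,b}(λ) → (1 - p) c b^(-p)`, and subtracting the two instances gives the limit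
`(p - 1)(Z - X Y^(-p))`, negative as soon as `X Y^(-p) > Z`.
-/

open Real Filter Topology

lemma Filter.EventuallyEq.deriv_atTop {E : Type*} [NormedAddCommGroup E] [NormedSpace ℝ E]
    {f g : ℝ → E} (h : f =ᶠ[atTop] g) : deriv f =ᶠ[atTop] deriv g := by
  obtain ⟨N, hN⟩ := eventually_atTop.1 h
  filter_upwards [eventually_gt_atTop N] with l hl
  exact EventuallyEq.deriv_eq (eventually_of_mem (Ioi_mem_nhds hl) fun x hx => hN x (le_of_lt hx))

section

variable (a c : ℝ) {b p : ℝ}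

lemma tendsto_const_add_mul_atTop (hb : 0 < b) : Tendsto (fun l : ℝ => a + b * l) atTop atTop :=
  tendsto_atTop_add_const_left _ _ (tendsto_id.const_mul_atTop hb)

lemma tendsto_rpow_mul_const_add_mul_rpow_neg (hb : 0 < b) (q : ℝ) :
    Tendsto (fun l : ℝ => l ^ q * (a + b * l) ^ (-q)) atTop (𝓝 (b ^ (-q))) := by
  have hratio : Tendsto (fun l : ℝ => (a * l⁻¹ + b)⁻¹) atTop (𝓝 b⁻¹) := by
    simpa using ((tendsto_inv_atTop_zero.const_mul a).add_const b).inv₀ (by simpa using hb.ne')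
  have hpow :=
    (continuousAt_rpow_const b⁻¹ q (Or.inl (inv_ne_zero hb.ne'))).tendsto.comp hratio
  rw [inv_rpow hb.le, ← rpow_neg hb.le] at hpow
  refine hpow.congr' ?_
  filter_upwards [eventually_gt_atTop 0,
    (tendsto_const_add_mul_atTop a hb).eventually_gt_atTop 0] with l hl hal
  have hquot : (a * l⁻¹ + b)⁻¹ = l * (a + b * l)⁻¹ := by field_simp
  simp only [Function.comp, hquot, mul_rpow hl.le (inv_nonneg.2 hal.le), inv_rpow hal.le,
    rpow_neg hal.le]

lemma tendsto_one_add_mul_const_add_mul_rpow_neg (hb : 0 < b) (hp : 0 < p) :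
    Tendsto (fun l : ℝ => 1 + c * (a + b * l) ^ (-p)) atTop (𝓝 1) := by
  simpa using
    (((tendsto_rpow_neg_atTop hp).comp (tendsto_const_add_mul_atTop a hb)).const_mul c).const_add 1

lemma tendsto_rpow_mul_log_one_add_mul_rpow_neg (hb : 0 < b) (hp : 0 < p) :
    Tendsto (fun l : ℝ => l ^ p * log (1 + c * (a + b * l) ^ (-p))) atTop
      (𝓝 (b ^ (-p) * c)) := by
  have hlog := (tendsto_mul_log_one_add_div_atTop c).comp
    ((tendsto_rpow_atTop hp).comp (tendsto_const_add_mul_atTop a hb))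
  refine ((tendsto_rpow_mul_const_add_mul_rpow_neg a hb p).mul hlog).congr' ?_
  filter_upwards [(tendsto_const_add_mul_atTop a hb).eventually_gt_atTop 0] with l hal
  simp only [Function.comp, rpow_neg hal.le]
  field_simp

lemma hasDerivAt_mul_log_one_add_mul_rpow_neg {l : ℝ} (hal : 0 < a + b * l)
    (hne : 1 + c * (a + b * l) ^ (-p) ≠ 0) :
    HasDerivAt (fun x : ℝ => x * log (1 + c * (a + b * x) ^ (-p)))
      (log (1 + c * (a + b * l) ^ (-p)) +
        l * (c * (b * -p * (a + b * l) ^ (-p - 1)) / (1 + c * (a + b * l) ^ (-p)))) l := by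
  have hlin : HasDerivAt (fun x : ℝ => a + b * x) b l := by
    simpa using ((hasDerivAt_id l).const_mul b).const_add a
  have hlog := (((hlin.rpow_const (p := -p) (Or.inl hal.ne')).const_mul c).const_add 1).log hne
  exact ((hasDerivAt_id' l).mul hlog).congr_deriv (by rw [one_mul])

lemma eventually_hasDerivAt_mul_log_one_add_mul_rpow_neg (hb : 0 < b) (hp : 0 < p) :
    ∀ᶠ l in atTop, HasDerivAt (fun x : ℝ => x * log (1 + c * (a + b * x) ^ (-p)))
      (log (1 + c * (a + b * l) ^ (-p)) +
        l * (c * (b * -p * (a + b * l) ^ (-p - 1)) / (1 + c * (a + b * l) ^ (-p)))) l := by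
  have hden := tendsto_one_add_mul_const_add_mul_rpow_neg a c hb hp
  filter_upwards [(tendsto_const_add_mul_atTop a hb).eventually_gt_atTop 0,
    hden.eventually_ne one_ne_zero] with l hal hne
  exact hasDerivAt_mul_log_one_add_mul_rpow_neg a c hal hne

lemma tendsto_rpow_mul_deriv_mul_log_one_add_mul_rpow_neg (hb : 0 < b) (hp : 0 < p) :
    Tendsto (fun l : ℝ => l ^ p * deriv (fun x : ℝ => x * log (1 + c * (a + b * x) ^ (-p))) l)
      atTop (𝓝 ((1 - p) * (b ^ (-p) * c))) := by
  have hden := tendsto_one_add_mul_const_add_mul_rpow_neg a c hb hp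
  have hnum : Tendsto (fun l : ℝ => l ^ (p + 1) * (c * (b * -p * (a + b * l) ^ (-p - 1))))
      atTop (𝓝 (-p * (b ^ (-p) * c))) := by
    have hb_pow : b * b ^ (-(p + 1)) = b ^ (-p) := by
      rw [rpow_neg hb.le, rpow_neg hb.le, rpow_add_one hb.ne']
      field_simp
    have h := (tendsto_rpow_mul_const_add_mul_rpow_neg a hb (p + 1)).const_mul (-p * c * b)
    rw [show -p * c * b * b ^ (-(p + 1)) = -p * (b ^ (-p) * c) by rw [← hb_pow]; ring] at h
    refine h.congr fun l => ?_
    rw [show -p - 1 = -(p + 1) by ring]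
    ring
  have h := (tendsto_rpow_mul_log_one_add_mul_rpow_neg a c hb hp).add (hnum.div hden one_ne_zero)
  rw [div_one, ← one_add_mul, ← sub_eq_add_neg] at h
  refine h.congr' ?_
  filter_upwards [eventually_gt_atTop 0,
    eventually_hasDerivAt_mul_log_one_add_mul_rpow_neg a c hb hp] with l hl hderiv
  rw [hderiv.deriv, Pi.div_apply, rpow_add_one hl.ne']
  ring

end

theorem F_deriv_neg_at_infty_general (α X Y Z : ℝ) (hα : 2 < α)
    (hY : 0 < Y)
    (f₁ f₂ F : ℝ → ℝ)
    (hf₁ : ∀ l : ℝ, f₁ l = 1 + X * (1 + Y * l) ^ (-(α / 2)))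
    (hf₂ : ∀ l : ℝ, f₂ l = 1 + Z * l ^ (-(α / 2)))
    (hF : ∀ l : ℝ, F l = l * Real.log (f₁ l / f₂ l)) :
    Tendsto (fun l : ℝ => l ^ (α / 2) * deriv F l) atTop
      (nhds (((α - 2) / 2) * (Z - X * Y ^ (-(α / 2))))) ∧
    (X > Z * Y ^ (α / 2) →
      (((α - 2) / 2) * (Z - X * Y ^ (-(α / 2))) < 0 ∧
        ∀ᶠ l : ℝ in atTop, deriv F l < 0)) := by
  have hp : 0 < α / 2 := by linarith
  have hF_eq : F =ᶠ[atTop] (fun x => x * log (1 + X * (1 + Y * x) ^ (-(α / 2)))) -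
      fun x => x * log (1 + Z * (0 + 1 * x) ^ (-(α / 2))) := by
    filter_upwards
      [(tendsto_one_add_mul_const_add_mul_rpow_neg 1 X hY hp).eventually_ne one_ne_zero,
        (tendsto_one_add_mul_const_add_mul_rpow_neg 0 Z one_pos hp).eventually_ne one_ne_zero]
      with l h₁ h₂
    simp only [zero_add, one_mul] at h₂ ⊢
    rw [Pi.sub_apply, hF, hf₁, hf₂, log_div h₁ h₂, mul_sub]
  have hlim : Tendsto (fun l : ℝ => l ^ (α / 2) * deriv F l) atTop
      (nhds (((α - 2) / 2) * (Z - X * Y ^ (-(α / 2))))) := by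
    have h := (tendsto_rpow_mul_deriv_mul_log_one_add_mul_rpow_neg 1 X hY hp).sub
      (tendsto_rpow_mul_deriv_mul_log_one_add_mul_rpow_neg 0 Z one_pos hp)
    rw [one_rpow, show (1 - α / 2) * (Y ^ (-(α / 2)) * X) - (1 - α / 2) * (1 * Z)
      = (α - 2) / 2 * (Z - X * Y ^ (-(α / 2))) by ring] at h
    refine h.congr' ?_
    filter_upwards [hF_eq.deriv_atTop,
      eventually_hasDerivAt_mul_log_one_add_mul_rpow_neg 1 X hY hp,
      eventually_hasDerivAt_mul_log_one_add_mul_rpow_neg 0 Z one_pos hp] with l hl h₁ h₂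
    rw [hl, (h₁.sub h₂).deriv, h₁.deriv, h₂.deriv, mul_sub]
  refine ⟨hlim, fun hXZ => ?_⟩
  have hneg : (α - 2) / 2 * (Z - X * Y ^ (-(α / 2))) < 0 := by
    have h := mul_lt_mul_of_pos_right hXZ (rpow_pos_of_pos hY (-(α / 2)))
    rw [mul_assoc, ← rpow_add hY, add_neg_cancel, rpow_zero, mul_one] at h
    exact mul_neg_of_pos_of_neg (by linarith) (by linarith)
  refine ⟨hneg, ?_⟩
  filter_upwards [hlim.eventually_lt_const hneg, eventually_gt_atTop 0] with l hl hl_pos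
  exact neg_of_mul_neg_right hl (rpow_nonneg hl_pos.le _)

/-- Asymptotic sign of `F'` at infinity (equation (dF1_INFTY) of the paper): with
`f₁(λ) = 1 + X(1+Yλ)^(-α/2)`, `f₂(λ) = 1 + Zλ^(-α/2)`, `F(λ) = λ ln(f₁(λ)/f₂(λ))`,
one has `lim_{λ→∞} λ^(α/2) F'(λ) = ((α-2)/2)(Z - X Y^(-α/2))`; in particular, if
`X > Z Y^(α/2)` then `F'(λ) < 0` for all sufficiently large `λ`. -/
theorem F_deriv_neg_at_infty (α X Y Z : ℝ) (hα : 2 < α)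
    (hX : 0 < X) (hY : 0 < Y) (hZ : 0 < Z)
    (f₁ f₂ F : ℝ → ℝ)
    (hf₁ : ∀ l : ℝ, f₁ l = 1 + X * (1 + Y * l) ^ (-(α / 2)))
    (hf₂ : ∀ l : ℝ, f₂ l = 1 + Z * l ^ (-(α / 2)))
    (hF : ∀ l : ℝ, F l = l * Real.log (f₁ l / f₂ l)) :
    Tendsto (fun l : ℝ => l ^ (α / 2) * deriv F l) atTop
      (nhds (((α - 2) / 2) * (Z - X * Y ^ (-(α / 2))))) ∧
    (X > Z * Y ^ (α / 2) →
      (((α - 2) / 2) * (Z - X * Y ^ (-(α / 2))) < 0 ∧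
        ∀ᶠ l : ℝ in atTop, deriv F l < 0)) :=
  F_deriv_neg_at_infty_general α X Y Z hα hY f₁ f₂ F hf₁ hf₂ hF
end

section
/- With α > 2, δ := 2/α, X, Y, Z > 0 satisfying X > Z Y^(α/2), and λ^L := 1/((X/Z)^(2/α) − Y): define G(λ) := 1 + λ · f′(λ)/f(λ) for λ > λ^L, where f(λ) := ln(f₁(λ)/f₂(λ)) (note f(λ) > 0 for λ > λ^L). Then G′(λ) < 0 for every λ > λ^L; that is, G is strictly decreasing on (λ^L, ∞). -/
/-!
Put `s = α/2`, `f₁ = 1 + g₁`, `f₂ = 1 + g₂`, and `A = g₁/f₁`, `B = g₂/f₂`, `w = Yλ/(1 + Yλ)`.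
Since `λ g₁' = -s w g₁` and `λ g₂' = -s g₂`, the function `h = λ f'` equals `s (B - w A)` and
`λ h' = s Q` with `Q = s (w²A(1-A) - B(1-B)) - w(1-w)A`. As `G = 1 + h/f`, the sign of `G'` is
that of `λ h' f - h² = s Q f - h²`. For `λ > λ^L` we have `g₂ < g₁`, so `0 < B < A < 1` and
`f > 0`, and `log x < x - 1` gives `f (1 - A) < A - B`; together with an exact polynomial
identity for `Q (A - B)` this forces `s Q f < h²`.
-/

open Real Filter Topology

theorem exists_hasDerivAt_neg_one_add_mul_deriv_div {f h : ℝ → ℝ} {h' l : ℝ} (hl : 0 < l)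
    (hf : ∀ᶠ t in 𝓝 l, HasDerivAt f (h t / t) t) (hh : HasDerivAt h h' l) (hfl : 0 < f l)
    (hlt : l * h' * f l < h l ^ 2) :
    ∃ d < 0, HasDerivAt (fun t => 1 + t * deriv f t / f t) d l := by
  have hev : (fun t => 1 + t * deriv f t / f t) =ᶠ[𝓝 l] fun t => 1 + h t / f t := by
    filter_upwards [hf, lt_mem_nhds hl] with t hft ht
    rw [hft.deriv, mul_div_cancel₀ _ ht.ne']
  refine ⟨(l * h' * f l - h l ^ 2) / (l * f l ^ 2),
    div_neg_of_neg_of_pos (by linarith) (by positivity), ?_⟩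
  refine (((hh.div hf.self_of_nhds hfl.ne').const_add 1).congr_of_eventuallyEq hev).congr_deriv ?_
  field_simp

noncomputable def oddsToProb (u : ℝ) : ℝ := u / (1 + u)

theorem oddsToProb_pos {u : ℝ} (hu : 0 < u) : 0 < oddsToProb u := by
  unfold oddsToProb; positivity

theorem oddsToProb_lt_one {u : ℝ} (hu : 0 ≤ u) : oddsToProb u < 1 :=
  (div_lt_one (by positivity)).2 (by linarith)

theorem oddsToProb_lt_oddsToProb {a b : ℝ} (ha : 0 ≤ a) (hab : a < b) :
    oddsToProb a < oddsToProb b := by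
  unfold oddsToProb
  rw [div_lt_div_iff₀ (by positivity) (by linarith)]
  linarith

theorem log_one_add_sub_log_one_add_mul_lt {a b : ℝ} (hb : 0 ≤ b) (hba : b < a) :
    (log (1 + a) - log (1 + b)) * (1 - oddsToProb a) < oddsToProb a - oddsToProb b := by
  have ha : 0 < 1 + a := by linarith
  have hb' : 0 < 1 + b := by linarith
  have hlog : log (1 + a) - log (1 + b) < (a - b) / (1 + b) := by
    rw [← log_div ha.ne' hb'.ne']
    calc log ((1 + a) / (1 + b)) < (1 + a) / (1 + b) - 1 :=
          log_lt_sub_one_of_pos (by positivity) (by rw [Ne, div_eq_one_iff_eq hb'.ne']; linarith)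
      _ = (a - b) / (1 + b) := by field_simp; ring
  calc (log (1 + a) - log (1 + b)) * (1 - oddsToProb a) = (log (1 + a) - log (1 + b)) / (1 + a) := by
        unfold oddsToProb; field_simp; ring
    _ < (a - b) / (1 + b) / (1 + a) := div_lt_div_of_pos_right hlog ha
    _ = oddsToProb a - oddsToProb b := by unfold oddsToProb; field_simp; ring

theorem hasDerivAt_oddsToProb_comp {u : ℝ → ℝ} {c t : ℝ} (hu : HasDerivAt u (c * u t) t)
    (h1 : 1 + u t ≠ 0) :
    HasDerivAt (fun x => oddsToProb (u x)) (c * (oddsToProb (u t) * (1 - oddsToProb (u t)))) t := by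
  refine (hu.div (hu.const_add 1) h1).congr_deriv ?_
  unfold oddsToProb
  field_simp

theorem hasDerivAt_log_one_add_comp {u : ℝ → ℝ} {c t : ℝ} (hu : HasDerivAt u (c * u t) t)
    (h1 : 1 + u t ≠ 0) :
    HasDerivAt (fun x => log (1 + u x)) (c * oddsToProb (u t)) t := by
  refine ((hu.const_add 1).log h1).congr_deriv ?_
  rw [oddsToProb, mul_div_assoc]

theorem mul_lt_sq_of_mul_one_sub_lt {s A B w φ : ℝ} (hs : 0 < s) (hB : 0 < B) (hBA : B < A)
    (hA : A < 1) (hw : 0 < w) (hw1 : w < 1) (hφ : 0 < φ) (hφA : φ * (1 - A) < A - B) :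
    s * (s * (w ^ 2 * A * (1 - A) - B * (1 - B)) - w * (1 - w) * A) * φ
      < (s * (B - w * A)) ^ 2 := by
  set Q := s * (w ^ 2 * A * (1 - A) - B * (1 - B)) - w * (1 - w) * A
  have hA0 : 0 < 1 - A := sub_pos.2 hA
  have hQ : Q * (A - B) < s * (B - w * A) ^ 2 * (1 - A) := by
    have hQ_eq : Q * (A - B) = s * (B - w * A) ^ 2 * (1 - A)
        - s * B * ((A - B) ^ 2 + A * (1 - A) * (1 - w) ^ 2) - w * (1 - w) * A * (A - B) := by
      ring
    have : 0 < w * (1 - w) * A * (A - B) :=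
      mul_pos (mul_pos (mul_pos hw (sub_pos.2 hw1)) (hB.trans hBA)) (sub_pos.2 hBA)
    have : 0 ≤ s * B * ((A - B) ^ 2 + A * (1 - A) * (1 - w) ^ 2) := by
      have := (hB.trans hBA).le; positivity
    linarith
  rcases lt_trichotomy Q 0 with hQ0 | hQ0 | hQ0
  · have : s * Q * φ < 0 := mul_neg_of_neg_of_pos (mul_neg_of_pos_of_neg hs hQ0) hφ
    linarith [sq_nonneg (s * (B - w * A))]
  · have : B - w * A ≠ 0 := by
      rintro h
      rw [hQ0, h] at hQ
      simp at hQ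
    rw [hQ0, mul_zero, zero_mul]
    positivity
  · have h1 : s * Q * φ * (1 - A) < s * Q * (A - B) := by
      rw [mul_assoc (s * Q)]; exact mul_lt_mul_of_pos_left hφA (mul_pos hs hQ0)
    have h2 : s * Q * (A - B) < (s * (B - w * A)) ^ 2 * (1 - A) := by
      nlinarith [mul_lt_mul_of_pos_left hQ hs]
    exact lt_of_mul_lt_mul_right (h1.trans h2) hA0.le

namespace LogRatio

variable {s X Y Z t : ℝ}

noncomputable def g₁ (s X Y t : ℝ) : ℝ := X * (1 + Y * t) ^ (-s)

noncomputable def g₂ (s Z t : ℝ) : ℝ := Z * t ^ (-s)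

noncomputable def f (s X Y Z t : ℝ) : ℝ := log (1 + g₁ s X Y t) - log (1 + g₂ s Z t)

noncomputable def scaledDeriv (s X Y Z t : ℝ) : ℝ :=
  s * (oddsToProb (g₂ s Z t) - oddsToProb (Y * t) * oddsToProb (g₁ s X Y t))

theorem g₁_nonneg (hX : 0 ≤ X) (hY : 0 ≤ Y) (ht : 0 < t) : 0 ≤ g₁ s X Y t := by
  unfold g₁; have : 0 < 1 + Y * t := by positivity
  positivity

theorem g₂_nonneg (hZ : 0 ≤ Z) (ht : 0 < t) : 0 ≤ g₂ s Z t := by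
  unfold g₂; positivity

theorem hasDerivAt_g₁ (hY : 0 ≤ Y) (ht : 0 < t) :
    HasDerivAt (g₁ s X Y) (-(s * oddsToProb (Y * t) / t) * g₁ s X Y t) t := by
  have hYt : 0 < 1 + Y * t := by positivity
  have hlin : HasDerivAt (fun x => 1 + Y * x) Y t := by
    simpa using ((hasDerivAt_id t).const_mul Y).const_add 1
  refine ((hlin.rpow_const (p := -s) (Or.inl hYt.ne')).const_mul X).congr_deriv ?_
  rw [rpow_sub_one hYt.ne', g₁, oddsToProb]
  field_simp

theorem hasDerivAt_g₂ (ht : 0 < t) : HasDerivAt (g₂ s Z) (-(s / t) * g₂ s Z t) t := by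
  refine ((hasDerivAt_rpow_const (p := -s) (Or.inl ht.ne')).const_mul Z).congr_deriv ?_
  rw [rpow_sub_one ht.ne', g₂]
  field_simp

theorem hasDerivAt_f (hX : 0 ≤ X) (hY : 0 ≤ Y) (hZ : 0 ≤ Z) (ht : 0 < t) :
    HasDerivAt (f s X Y Z) (scaledDeriv s X Y Z t / t) t := by
  have h₁ := hasDerivAt_log_one_add_comp (hasDerivAt_g₁ (s := s) (X := X) hY ht)
    (by linarith [g₁_nonneg (s := s) hX hY ht])
  have h₂ := hasDerivAt_log_one_add_comp (hasDerivAt_g₂ (s := s) (Z := Z) ht)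
    (by linarith [g₂_nonneg (s := s) hZ ht])
  refine (h₁.sub h₂).congr_deriv ?_
  rw [scaledDeriv]
  ring

theorem f_pos (hZ : 0 ≤ Z) (ht : 0 < t) (hg : g₂ s Z t < g₁ s X Y t) : 0 < f s X Y Z t :=
  sub_pos.2 (log_lt_log (by linarith [g₂_nonneg (s := s) hZ ht]) (by linarith))

theorem log_div_eq_f (hX : 0 ≤ X) (hY : 0 ≤ Y) (hZ : 0 ≤ Z) (ht : 0 < t) :
    log ((1 + X * (1 + Y * t) ^ (-s)) / (1 + Z * t ^ (-s))) = f s X Y Z t :=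
  log_div (add_pos_of_pos_of_nonneg one_pos (g₁_nonneg hX hY ht)).ne'
    (add_pos_of_pos_of_nonneg one_pos (g₂_nonneg hZ ht)).ne'

theorem g₂_lt_g₁ (hs : 0 < s) (hX : 0 ≤ X) (hY : 0 ≤ Y) (hZ : 0 < Z) (hc : Y < (X / Z) ^ s⁻¹)
    (ht : 1 / ((X / Z) ^ s⁻¹ - Y) < t) : g₂ s Z t < g₁ s X Y t := by
  have hd : 0 < (X / Z) ^ s⁻¹ - Y := sub_pos.2 hc
  have ht0 : 0 < t := (one_div_pos.2 hd).trans ht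
  have hYt : 0 < 1 + Y * t := by positivity
  have hlt : (1 + Y * t) / t < (X / Z) ^ s⁻¹ := by
    rw [div_lt_iff₀ hd] at ht
    rw [div_lt_iff₀ ht0]
    linarith
  have hpow := (lt_rpow_inv_iff_of_pos (by positivity) (div_nonneg hX hZ.le) hs).1 hlt
  rw [div_rpow hYt.le ht0.le, div_lt_div_iff₀ (by positivity) hZ] at hpow
  rw [g₁, g₂, rpow_neg ht0.le, rpow_neg hYt.le, ← div_eq_mul_inv, ← div_eq_mul_inv,
    div_lt_div_iff₀ (by positivity) (by positivity)]
  linarith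

theorem exists_hasDerivAt_scaledDeriv_mul_f_lt_sq (hs : 0 < s) (hY : 0 < Y) (hZ : 0 < Z)
    (ht : 0 < t) (hg : g₂ s Z t < g₁ s X Y t) :
    ∃ h', HasDerivAt (scaledDeriv s X Y Z) h' t ∧
      t * h' * f s X Y Z t < scaledDeriv s X Y Z t ^ 2 := by
  have hg₂ : 0 < g₂ s Z t := by unfold g₂; positivity
  have hA := hasDerivAt_oddsToProb_comp (hasDerivAt_g₁ (s := s) (X := X) hY.le ht) (by linarith)
  have hB := hasDerivAt_oddsToProb_comp (hasDerivAt_g₂ (s := s) (Z := Z) ht) (by linarith)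
  have hw := hasDerivAt_oddsToProb_comp (u := fun x => Y * x) (c := t⁻¹)
    (((hasDerivAt_id t).const_mul Y).congr_deriv (by field_simp)) (by positivity)
  refine ⟨_, (hB.sub (hw.mul hA)).const_mul s, ?_⟩
  have key := mul_lt_sq_of_mul_one_sub_lt hs (oddsToProb_pos hg₂)
    (oddsToProb_lt_oddsToProb hg₂.le hg) (oddsToProb_lt_one (hg₂.trans hg).le)
    (oddsToProb_pos (mul_pos hY ht)) (oddsToProb_lt_one (mul_pos hY ht).le) (f_pos hZ.le ht hg)
    (log_one_add_sub_log_one_add_mul_lt hg₂.le hg)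
  rw [scaledDeriv]
  convert key using 1
  field_simp
  ring

end LogRatio

/-- Monotonicity of the auxiliary function `G` (Appendix E of the paper): with
`f₁(λ) = 1 + X(1+Yλ)^(-α/2)`, `f₂(λ) = 1 + Zλ^(-α/2)`, `f(λ) = ln(f₁(λ)/f₂(λ))`,
`G(λ) = 1 + λ f'(λ)/f(λ)`, and `λ^L = 1/((X/Z)^(2/α) - Y)` under `X > Z Y^(α/2)`:
`f(λ) > 0` and `G'(λ) < 0` for every `λ > λ^L`, and `G` is strictly decreasing
on `(λ^L, ∞)`. -/
theorem G_strictly_decreasing (α X Y Z : ℝ) (hα : 2 < α)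
    (hX : 0 < X) (hY : 0 < Y) (hZ : 0 < Z)
    (hcond : X > Z * Y ^ (α / 2))
    (lL : ℝ) (hlL : lL = 1 / ((X / Z) ^ (2 / α) - Y))
    (f₁ f₂ f G : ℝ → ℝ)
    (hf₁ : ∀ l : ℝ, f₁ l = 1 + X * (1 + Y * l) ^ (-(α / 2)))
    (hf₂ : ∀ l : ℝ, f₂ l = 1 + Z * l ^ (-(α / 2)))
    (hf : ∀ l : ℝ, f l = Real.log (f₁ l / f₂ l))
    (hG : ∀ l : ℝ, G l = 1 + l * deriv f l / f l) :
    (∀ l : ℝ, lL < l → 0 < f l) ∧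
    (∀ l : ℝ, lL < l → deriv G l < 0) ∧
    StrictAntiOn G (Set.Ioi lL) := by
  rw [← inv_div α 2] at hlL
  set s := α / 2
  have hs : 0 < s := by positivity
  have hc : Y < (X / Z) ^ s⁻¹ :=
    (lt_rpow_inv_iff_of_pos hY.le (by positivity) hs).2 (by rw [lt_div_iff₀ hZ]; linarith)
  have hlL0 : 0 < lL := hlL ▸ one_div_pos.2 (sub_pos.2 hc)
  have hg : ∀ t ∈ Set.Ioi lL, LogRatio.g₂ s Z t < LogRatio.g₁ s X Y t := fun t ht =>
    LogRatio.g₂_lt_g₁ hs hX.le hY.le hZ hc (hlL ▸ ht)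
  have hfeq : Set.EqOn f (LogRatio.f s X Y Z) (Set.Ioi lL) := fun t ht => by
    rw [hf, hf₁, hf₂, LogRatio.log_div_eq_f hX.le hY.le hZ.le (hlL0.trans ht)]
  have hfpos : ∀ t ∈ Set.Ioi lL, 0 < f t := fun t ht =>
    hfeq ht ▸ LogRatio.f_pos hZ.le (hlL0.trans ht) (hg t ht)
  have hG' : ∀ l ∈ Set.Ioi lL, ∃ d < 0, HasDerivAt G d l := by
    intro l hl
    obtain ⟨h', hh, hlt⟩ :=
      LogRatio.exists_hasDerivAt_scaledDeriv_mul_f_lt_sq hs hY hZ (hlL0.trans hl) (hg l hl)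
    have hfd : ∀ᶠ t in 𝓝 l, HasDerivAt f (LogRatio.scaledDeriv s X Y Z t / t) t := by
      filter_upwards [Ioi_mem_nhds hl] with t ht
      exact (LogRatio.hasDerivAt_f hX.le hY.le hZ.le (hlL0.trans ht)).congr_of_eventuallyEq
        (hfeq.eventuallyEq_of_mem (Ioi_mem_nhds ht))
    rw [funext hG]
    exact exists_hasDerivAt_neg_one_add_mul_deriv_div (hlL0.trans hl) hfd hh (hfpos l hl)
      (by rwa [hfeq hl])
  have hderiv : ∀ l ∈ Set.Ioi lL, deriv G l < 0 := fun l hl =>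
    let ⟨_, hd, hGd⟩ := hG' l hl
    hGd.deriv ▸ hd
  exact ⟨hfpos, hderiv, strictAntiOn_of_deriv_neg (convex_Ioi lL)
    (fun l hl => (hG' l hl).choose_spec.2.continuousAt.continuousWithinAt)
    (by rwa [interior_Ioi])⟩
end

section
/- With α > 2, δ := 2/α and X, Y, Z > 0 satisfying X > Z Y^(α/2), and λ^L := 1/((X/Z)^(2/α) − Y): there exists a unique λ* ∈ (λ^L, ∞) such that F′(λ*) = 0; moreover F′(λ) > 0 for all λ ∈ (λ^L, λ*) and F′(λ) < 0 for all λ ∈ (λ*, ∞). Consequently F is strictly increasing on (λ^L, λ*], strictly decreasing on [λ*, ∞), and attains its maximum over (λ^L, ∞) uniquely at λ*. -/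
/-!
Write `c = α / 2`, `f₁ = 1 + u`, `f₂ = 1 + v`, `U = u / (1 + u)`, `V = v / (1 + v)` and
`θ = Yλ / (1 + Yλ)`. Then `λ f' = -g` with `g = c (θ U - V)`, so `F' = f - g`. On `(λ^L, ∞)`
we have `u > v`, hence `f > 0` and `F' = f (1 - R)` with `R = g / f`. The ratio `R` is strictly
increasing, because `λ f² R' = λ g' f + g²` and the bound `f (1 - U) ≤ U - V` (from
`log x ≤ x - 1`) makes the right side positive. Finally `F (λ^L) = 0 < F` on `(λ^L, ∞)` and
`F → 0` at infinity (as `c > 1`), so by the mean value theorem `F'` takes both signs; by Darboux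
it vanishes at some `λ*`, where `R = 1`, and `F'` has the sign of `R λ* - R`.
-/

open Real Set Filter Topology

section LogDerivative

variable {u : ℝ → ℝ} {k x : ℝ}

theorem hasDerivAt_div_one_add (hu : HasDerivAt u (k * u x) x) (h : 1 + u x ≠ 0) :
    HasDerivAt (fun y => u y / (1 + u y))
      (k * (u x / (1 + u x)) * (1 - u x / (1 + u x))) x := by
  refine (hu.div (hu.const_add 1) h).congr_deriv ?_
  field_simp

theorem hasDerivAt_log_one_add (hu : HasDerivAt u (k * u x) x) (h : 1 + u x ≠ 0) :
    HasDerivAt (fun y => log (1 + u y)) (k * (u x / (1 + u x))) x := by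
  refine ((hu.const_add 1).log h).congr_deriv ?_
  ring

end LogDerivative

theorem log_div_one_add_mul_le {a b : ℝ} (ha : 0 < 1 + a) (hb : 0 < 1 + b) :
    log ((1 + a) / (1 + b)) * (1 - a / (1 + a)) ≤ a / (1 + a) - b / (1 + b) := by
  have h₁ : 1 - a / (1 + a) = 1 / (1 + a) := by field_simp; ring
  calc log ((1 + a) / (1 + b)) * (1 - a / (1 + a))
      ≤ ((1 + a) / (1 + b) - 1) * (1 / (1 + a)) := by
        rw [h₁]
        exact mul_le_mul_of_nonneg_right (log_le_sub_one_of_pos (by positivity)) (by positivity)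
    _ = a / (1 + a) - b / (1 + b) := by field_simp; ring

theorem mul_sub_le_sq {θ U V f : ℝ} (hV : 0 ≤ V) (hU₀ : 0 ≤ U) (hU₁ : U < 1) (hf : 0 ≤ f)
    (hfU : f * (1 - U) ≤ U - V) :
    f * (θ ^ 2 * U * (1 - U) - V * (1 - V)) ≤ (V - θ * U) ^ 2 := by
  set B := θ ^ 2 * U * (1 - U) - V * (1 - V)
  rcases le_or_gt B 0 with hB | hB
  · exact (mul_nonpos_of_nonneg_of_nonpos hf hB).trans (sq_nonneg _)
  · have hsos : (1 - U) * (V - θ * U) ^ 2 - (U - V) * B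
        = V * (U * (1 - U) * (θ - 1) ^ 2 + (U - V) ^ 2) := by ring
    have hsos_nonneg : 0 ≤ V * (U * (1 - U) * (θ - 1) ^ 2 + (U - V) ^ 2) := by
      have : 0 ≤ U * (1 - U) := mul_nonneg hU₀ (by linarith)
      positivity
    have h : f * B * (1 - U) ≤ (V - θ * U) ^ 2 * (1 - U) :=
      calc f * B * (1 - U) = f * (1 - U) * B := by ring
        _ ≤ (U - V) * B := mul_le_mul_of_nonneg_right hfU hB.le
        _ ≤ (V - θ * U) ^ 2 * (1 - U) := by linarith
    exact le_of_mul_le_mul_right h (by linarith)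

theorem ratio_deriv_numerator_pos {c θ U V f : ℝ} (hc : 0 < c) (hθ₀ : 0 < θ) (hθ₁ : θ < 1) (hV : 0 ≤ V)
    (hU₀ : 0 < U) (hU₁ : U < 1) (hf : 0 < f) (hfU : f * (1 - U) ≤ U - V) :
    0 < c * (θ * (1 - θ) * U - c * θ ^ 2 * U * (1 - U) + c * V * (1 - V)) * f
      + (c * (θ * U - V)) ^ 2 := by
  have hsq := mul_sub_le_sq (θ := θ) hV hU₀.le hU₁ hf.le hfU
  have h₁ : 0 < c * θ * (1 - θ) * U * f := by
    have : 0 < 1 - θ := by linarith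
    positivity
  calc 0 < c * θ * (1 - θ) * U * f
        + c ^ 2 * ((V - θ * U) ^ 2 - f * (θ ^ 2 * U * (1 - U) - V * (1 - V))) :=
        add_pos_of_pos_of_nonneg h₁ (mul_nonneg (sq_nonneg c) (sub_nonneg.2 hsq))
    _ = _ := by ring

theorem strictMonoOn_strictAntiOn_of_deriv_sign {F : ℝ → ℝ} {a m : ℝ} (ham : a < m)
    (hd : ∀ x ∈ Ioi a, DifferentiableAt ℝ F x) (hpos : ∀ x ∈ Ioo a m, 0 < deriv F x)
    (hneg : ∀ x ∈ Ioi m, deriv F x < 0) :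
    StrictMonoOn F (Ioc a m) ∧ StrictAntiOn F (Ici m) ∧ (∀ x ∈ Ioi a, x ≠ m → F x < F m) ∧
      ∀ x ∈ Ioi a, deriv F x = 0 → x = m := by
  have hcont : ContinuousOn F (Ioi a) := fun x hx => (hd x hx).continuousAt.continuousWithinAt
  have hmono : StrictMonoOn F (Ioc a m) :=
    strictMonoOn_of_deriv_pos (convex_Ioc a m) (hcont.mono Ioc_subset_Ioi_self)
      fun x hx => hpos x (by rwa [interior_Ioc] at hx)
  have hanti : StrictAntiOn F (Ici m) :=
    strictAntiOn_of_deriv_neg (convex_Ici m) (hcont.mono fun x hx => ham.trans_le hx)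
      fun x hx => hneg x (by rwa [interior_Ici] at hx)
  refine ⟨hmono, hanti, fun x hx hxm => ?_, fun x hx hx0 => ?_⟩
  · rcases hxm.lt_or_gt with h | h
    · exact hmono ⟨hx, h.le⟩ ⟨ham, le_rfl⟩ h
    · exact hanti self_mem_Ici h.le h
  · by_contra hxm
    rcases lt_or_gt_of_ne hxm with h | h
    · exact (hpos x ⟨hx, h⟩).ne' hx0
    · exact (hneg x h).ne hx0

namespace SecrecyThroughput

variable (c X Y Z : ℝ)

noncomputable def u (l : ℝ) : ℝ := X * (1 + Y * l) ^ (-c)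

noncomputable def v (l : ℝ) : ℝ := Z * l ^ (-c)

noncomputable def f (l : ℝ) : ℝ := log ((1 + u c X Y l) / (1 + v c Z l))

noncomputable def F (l : ℝ) : ℝ := l * f c X Y Z l

noncomputable def θ (l : ℝ) : ℝ := Y * l / (1 + Y * l)

noncomputable def U (l : ℝ) : ℝ := u c X Y l / (1 + u c X Y l)

noncomputable def V (l : ℝ) : ℝ := v c Z l / (1 + v c Z l)

noncomputable def g (l : ℝ) : ℝ := c * (θ Y l * U c X Y l - V c Z l)

noncomputable def dF (l : ℝ) : ℝ := f c X Y Z l - g c X Y Z l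

noncomputable def R (l : ℝ) : ℝ := g c X Y Z l / f c X Y Z l

variable {c X Y Z} {l : ℝ}

theorem u_pos (hX : 0 < X) (hY : 0 ≤ Y) (hl : 0 ≤ l) : 0 < u c X Y l := by
  unfold u; positivity

theorem v_pos (hZ : 0 < Z) (hl : 0 < l) : 0 < v c Z l := by
  unfold v; positivity

theorem hasDerivAt_u (hY : 0 ≤ Y) (hl : 0 < l) :
    HasDerivAt (u c X Y) (-c * θ Y l / l * u c X Y l) l := by
  have h₀ : 1 + Y * l ≠ 0 := by positivity
  have h := ((((hasDerivAt_id l).const_mul Y).const_add 1).rpow_const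
    (p := -c) (Or.inl h₀)).const_mul X
  refine h.congr_deriv ?_
  rw [id, rpow_sub_one h₀]
  unfold θ u
  field_simp

theorem hasDerivAt_v (hl : 0 < l) : HasDerivAt (v c Z) (-c / l * v c Z l) l := by
  have h := ((hasDerivAt_id l).rpow_const (p := -c) (Or.inl hl.ne')).const_mul Z
  refine h.congr_deriv ?_
  rw [id, rpow_sub_one hl.ne']
  unfold v
  field_simp

theorem hasDerivAt_θ (hY : 0 ≤ Y) (hl : 0 < l) :
    HasDerivAt (θ Y) (1 / l * θ Y l * (1 - θ Y l)) l := by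
  have h : HasDerivAt (fun y => Y * y) (1 / l * (Y * l)) l := by
    refine ((hasDerivAt_id l).const_mul Y).congr_deriv ?_
    field_simp
  exact hasDerivAt_div_one_add h (by positivity)

theorem hasDerivAt_U (hX : 0 < X) (hY : 0 ≤ Y) (hl : 0 < l) :
    HasDerivAt (U c X Y) (-c * θ Y l / l * U c X Y l * (1 - U c X Y l)) l :=
  hasDerivAt_div_one_add (hasDerivAt_u hY hl) (add_pos one_pos (u_pos hX hY hl.le)).ne'

theorem hasDerivAt_V (hZ : 0 < Z) (hl : 0 < l) :
    HasDerivAt (V c Z) (-c / l * V c Z l * (1 - V c Z l)) l :=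
  hasDerivAt_div_one_add (hasDerivAt_v hl) (add_pos one_pos (v_pos hZ hl)).ne'

theorem hasDerivAt_f (hX : 0 < X) (hY : 0 ≤ Y) (hZ : 0 < Z) (hl : 0 < l) :
    HasDerivAt (f c X Y Z) (-g c X Y Z l / l) l := by
  have h := (hasDerivAt_log_one_add (hasDerivAt_u (c := c) (X := X) hY hl)
    (add_pos one_pos (u_pos hX hY hl.le)).ne').sub
    (hasDerivAt_log_one_add (hasDerivAt_v (c := c) (Z := Z) hl) (add_pos one_pos (v_pos hZ hl)).ne')
  refine (h.congr_of_eventuallyEq ?_).congr_deriv ?_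
  · filter_upwards [lt_mem_nhds hl] with y hy
    exact log_div (add_pos one_pos (u_pos hX hY hy.le)).ne' (add_pos one_pos (v_pos hZ hy)).ne'
  · unfold g U V
    ring

theorem hasDerivAt_F (hX : 0 < X) (hY : 0 ≤ Y) (hZ : 0 < Z) (hl : 0 < l) :
    HasDerivAt (F c X Y Z) (dF c X Y Z l) l := by
  refine ((hasDerivAt_id l).mul (hasDerivAt_f hX hY hZ hl)).congr_deriv ?_
  simp only [id, dF]
  field_simp
  ring

theorem hasDerivAt_g (hX : 0 < X) (hY : 0 ≤ Y) (hZ : 0 < Z) (hl : 0 < l) :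
    HasDerivAt (g c X Y Z)
      (c * (θ Y l * (1 - θ Y l) * U c X Y l - c * θ Y l ^ 2 * U c X Y l * (1 - U c X Y l)
        + c * V c Z l * (1 - V c Z l)) / l) l := by
  refine ((((hasDerivAt_θ hY hl).mul (hasDerivAt_U hX hY hl)).sub
    (hasDerivAt_V hZ hl)).const_mul c).congr_deriv ?_
  field_simp
  ring

theorem hasDerivAt_R (hX : 0 < X) (hY : 0 ≤ Y) (hZ : 0 < Z) (hl : 0 < l)
    (hf : f c X Y Z l ≠ 0) :
    HasDerivAt (R c X Y Z)
      ((c * (θ Y l * (1 - θ Y l) * U c X Y l - c * θ Y l ^ 2 * U c X Y l * (1 - U c X Y l)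
        + c * V c Z l * (1 - V c Z l)) * f c X Y Z l + g c X Y Z l ^ 2)
        / (l * f c X Y Z l ^ 2)) l := by
  refine ((hasDerivAt_g hX hY hZ hl).div (hasDerivAt_f hX hY hZ hl) hf).congr_deriv ?_
  field_simp
  ring

theorem dF_eq_mul_one_sub_R (hf : f c X Y Z l ≠ 0) :
    dF c X Y Z l = f c X Y Z l * (1 - R c X Y Z l) := by
  unfold dF R
  field_simp

theorem u_eq_rpow_mul_v {q : ℝ} (hY : 0 ≤ Y) (hZ : 0 < Z) (hl : 0 < l) (hq : 0 ≤ q)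
    (hqc : q ^ c = X / Z) : u c X Y l = (q / (1 / l + Y)) ^ c * v c Z l := by
  have hp : 0 < 1 / l + Y := by positivity
  have hsplit : 1 + Y * l = l * (1 / l + Y) := by field_simp
  unfold u v
  rw [hsplit, mul_rpow hl.le hp.le, div_rpow hq hp.le, hqc, rpow_neg hp.le]
  field_simp

theorem F_le (hc : 0 ≤ c) (hX : 0 < X) (hY : 0 < Y) (hZ : 0 < Z) (hl : 0 < l) :
    F c X Y Z l ≤ X * Y ^ (-c) * l ^ (1 - c) := by
  have hu := u_pos (c := c) hX hY.le hl.le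
  have hv := v_pos (c := c) hZ hl
  have hfu : f c X Y Z l ≤ u c X Y l := by
    calc f c X Y Z l ≤ (1 + u c X Y l) / (1 + v c Z l) - 1 := log_le_sub_one_of_pos (by positivity)
      _ ≤ (1 + u c X Y l) - 1 := by gcongr; exact div_le_self (by positivity) (by linarith)
      _ = u c X Y l := by ring
  have hux : u c X Y l ≤ X * (Y * l) ^ (-c) := by
    unfold u
    exact mul_le_mul_of_nonneg_left
      (rpow_le_rpow_of_nonpos (by positivity) (by linarith) (by linarith)) hX.le
  calc F c X Y Z l ≤ l * (X * (Y * l) ^ (-c)) := by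
        unfold F; gcongr; exact hfu.trans hux
    _ = X * Y ^ (-c) * l ^ (1 - c) := by
        rw [mul_rpow hY.le hl.le, sub_eq_neg_add, rpow_add_one hl.ne']
        ring

theorem eventually_F_lt (hc : 1 < c) (hX : 0 < X) (hY : 0 < Y) (hZ : 0 < Z) {ε : ℝ}
    (hε : 0 < ε) : ∀ᶠ l in atTop, F c X Y Z l < ε := by
  have hbound : Tendsto (fun l => X * Y ^ (-c) * l ^ (1 - c)) atTop (𝓝 0) := by
    simpa [neg_sub] using (tendsto_rpow_neg_atTop (sub_pos.2 hc)).const_mul (X * Y ^ (-c))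
  filter_upwards [hbound.eventually (gt_mem_nhds hε), eventually_gt_atTop 0] with l hl hl₀
  exact (F_le (by linarith) hX hY hZ hl₀).trans_lt hl

theorem continuousOn_F (hX : 0 < X) (hY : 0 ≤ Y) (hZ : 0 < Z) :
    ContinuousOn (F c X Y Z) (Ioi 0) := fun _ hl =>
  (hasDerivAt_F hX hY hZ hl).continuousAt.continuousWithinAt

section Threshold

variable {lL : ℝ}

theorem u_self_eq_v (hY : 0 ≤ Y) (hZ : 0 < Z) (hlL : 0 < lL) (hlLc : (1 / lL + Y) ^ c = X / Z) :
    u c X Y lL = v c Z lL := by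
  rw [u_eq_rpow_mul_v hY hZ hlL (by positivity) hlLc, div_self (by positivity), one_rpow,
    one_mul]

theorem v_lt_u (hc : 0 < c) (hY : 0 ≤ Y) (hZ : 0 < Z) (hlL : 0 < lL)
    (hlLc : (1 / lL + Y) ^ c = X / Z) (hl : lL < l) : v c Z l < u c X Y l := by
  have hl₀ : 0 < l := hlL.trans hl
  rw [u_eq_rpow_mul_v hY hZ hl₀ (by positivity) hlLc]
  refine lt_mul_of_one_lt_left (v_pos hZ hl₀) (one_lt_rpow ?_ hc)
  rw [one_lt_div (by positivity)]
  gcongr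

theorem f_self_eq_zero (hY : 0 ≤ Y) (hZ : 0 < Z) (hlL : 0 < lL)
    (hlLc : (1 / lL + Y) ^ c = X / Z) : f c X Y Z lL = 0 := by
  rw [f, u_self_eq_v hY hZ hlL hlLc, div_self (add_pos one_pos (v_pos hZ hlL)).ne', log_one]

theorem f_pos (hc : 0 < c) (hY : 0 ≤ Y) (hZ : 0 < Z) (hlL : 0 < lL)
    (hlLc : (1 / lL + Y) ^ c = X / Z) (hl : lL < l) : 0 < f c X Y Z l := by
  have hv := v_pos (c := c) hZ (hlL.trans hl)
  refine log_pos ((one_lt_div (by positivity)).2 ?_)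
  linarith [v_lt_u hc hY hZ hlL hlLc hl]

theorem strictMonoOn_R (hc : 0 < c) (hX : 0 < X) (hY : 0 < Y) (hZ : 0 < Z) (hlL : 0 < lL)
    (hlLc : (1 / lL + Y) ^ c = X / Z) : StrictMonoOn (R c X Y Z) (Ioi lL) := by
  have hR : ∀ l ∈ Ioi lL, HasDerivAt (R c X Y Z) _ l := fun l hl =>
    hasDerivAt_R hX hY.le hZ (hlL.trans hl) (f_pos hc hY.le hZ hlL hlLc hl).ne'
  refine strictMonoOn_of_deriv_pos (convex_Ioi lL)
    (fun l hl => (hR l hl).continuousAt.continuousWithinAt) fun l hl => ?_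
  rw [interior_Ioi] at hl
  have hl₀ : 0 < l := hlL.trans hl
  have hu := u_pos (c := c) hX hY.le hl₀.le
  have hv := v_pos (c := c) hZ hl₀
  have hf := f_pos hc hY.le hZ hlL hlLc hl
  have hθ₁ : θ Y l < 1 := (div_lt_one (by positivity)).2 (by linarith)
  have hU₁ : U c X Y l < 1 := (div_lt_one (by positivity)).2 (by linarith)
  have hfU : f c X Y Z l * (1 - U c X Y l) ≤ U c X Y l - V c Z l :=
    log_div_one_add_mul_le (by positivity) (by positivity)
  rw [(hR l hl).deriv]
  refine div_pos ?_ (by positivity)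
  exact ratio_deriv_numerator_pos hc (by unfold θ; positivity) hθ₁ (by unfold V; positivity)
    (by unfold U; positivity) hU₁ hf hfU

theorem exists_dF_pos (hc : 0 < c) (hX : 0 < X) (hY : 0 ≤ Y) (hZ : 0 < Z) (hlL : 0 < lL)
    (hlLc : (1 / lL + Y) ^ c = X / Z) : ∃ a, lL < a ∧ 0 < dF c X Y Z a := by
  obtain ⟨a, ha, hslope⟩ := exists_hasDerivAt_eq_slope (F c X Y Z) (dF c X Y Z) (lt_add_one lL)
    ((continuousOn_F hX hY hZ).mono fun x hx => hlL.trans_le hx.1)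
    fun x hx => hasDerivAt_F hX hY hZ (hlL.trans hx.1)
  refine ⟨a, ha.1, ?_⟩
  rw [hslope, F, F, f_self_eq_zero hY hZ hlL hlLc, mul_zero, sub_zero, add_sub_cancel_left,
    div_one]
  exact mul_pos (by linarith) (f_pos hc hY hZ hlL hlLc (lt_add_one lL))

theorem exists_dF_neg (hc : 1 < c) (hX : 0 < X) (hY : 0 < Y) (hZ : 0 < Z) (hlL : 0 < lL)
    (hlLc : (1 / lL + Y) ^ c = X / Z) {a : ℝ} (ha : lL < a) : ∃ b, a < b ∧ dF c X Y Z b < 0 := by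
  have ha₀ : 0 < a := hlL.trans ha
  have hFa : 0 < F c X Y Z a := mul_pos ha₀ (f_pos (by linarith) hY.le hZ hlL hlLc ha)
  obtain ⟨t, hFt, hat⟩ := ((eventually_F_lt hc hX hY hZ hFa).and (eventually_gt_atTop a)).exists
  obtain ⟨b, hb, hslope⟩ := exists_hasDerivAt_eq_slope (F c X Y Z) (dF c X Y Z) hat
    ((continuousOn_F hX hY.le hZ).mono fun x hx => ha₀.trans_le hx.1)
    fun x hx => hasDerivAt_F hX hY.le hZ (ha₀.trans hx.1)
  exact ⟨b, hb.1, hslope ▸ div_neg_of_neg_of_pos (by linarith) (by linarith)⟩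

theorem exists_dF_sign_change (hc : 1 < c) (hX : 0 < X) (hY : 0 < Y) (hZ : 0 < Z)
    (hlL : 0 < lL) (hlLc : (1 / lL + Y) ^ c = X / Z) :
    ∃ ls, lL < ls ∧ dF c X Y Z ls = 0 ∧ (∀ l ∈ Ioo lL ls, 0 < dF c X Y Z l) ∧
      ∀ l ∈ Ioi ls, dF c X Y Z l < 0 := by
  have hc₀ : 0 < c := by linarith
  obtain ⟨a, hlLa, ha⟩ := exists_dF_pos hc₀ hX hY.le hZ hlL hlLc
  obtain ⟨b, hab, hb⟩ := exists_dF_neg hc hX hY hZ hlL hlLc hlLa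
  obtain ⟨ls, hls, hdF⟩ := exists_hasDerivWithinAt_eq_of_lt_of_gt hab.le
    (fun x hx => (hasDerivAt_F hX hY.le hZ (hlL.trans (hlLa.trans_le hx.1))).hasDerivWithinAt)
    ha hb
  have hlLls : lL < ls := hlLa.trans hls.1
  have hf : ∀ l ∈ Ioi lL, 0 < f c X Y Z l := fun l hl => f_pos hc₀ hY.le hZ hlL hlLc hl
  have hRls : R c X Y Z ls = 1 := by
    have := dF_eq_mul_one_sub_R (hf ls hlLls).ne'
    rw [hdF, eq_comm, mul_eq_zero, sub_eq_zero] at this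
    exact (this.resolve_left (hf ls hlLls).ne').symm
  have hsign : ∀ l ∈ Ioi lL, dF c X Y Z l = f c X Y Z l * (R c X Y Z ls - R c X Y Z l) :=
    fun l hl => by rw [dF_eq_mul_one_sub_R (hf l hl).ne', hRls]
  have hR := strictMonoOn_R hc₀ hX hY hZ hlL hlLc
  refine ⟨ls, hlLls, hdF, fun l hl => ?_, fun l hl => ?_⟩
  · rw [hsign l hl.1]
    exact mul_pos (hf l hl.1) (sub_pos.2 (hR hl.1 hlLls hl.2))
  · have hl' : lL < l := hlLls.trans hl
    rw [hsign l hl']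
    exact mul_neg_of_pos_of_neg (hf l hl') (sub_neg.2 (hR hlLls hl' hl))

end Threshold

end SecrecyThroughput

/-- Theorem 4 of the paper (quasi-concavity of the secrecy throughput): with
`f₁(λ) = 1 + X(1+Yλ)^(-α/2)`, `f₂(λ) = 1 + Zλ^(-α/2)`, `F(λ) = λ ln(f₁(λ)/f₂(λ))`,
and `λ^L = 1/((X/Z)^(2/α) - Y)` under `X > Z Y^(α/2)`: there is a unique
`λ* ∈ (λ^L, ∞)` with `F'(λ*) = 0`; moreover `F' > 0` on `(λ^L, λ*)`, `F' < 0` on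
`(λ*, ∞)`, `F` is strictly increasing on `(λ^L, λ*]`, strictly decreasing on
`[λ*, ∞)`, and attains its maximum over `(λ^L, ∞)` uniquely at `λ*`. -/
theorem F_quasiconcave_unique_maximizer (α X Y Z : ℝ) (hα : 2 < α)
    (hX : 0 < X) (hY : 0 < Y) (hZ : 0 < Z)
    (hcond : X > Z * Y ^ (α / 2))
    (lL : ℝ) (hlL : lL = 1 / ((X / Z) ^ (2 / α) - Y))
    (f₁ f₂ F : ℝ → ℝ)
    (hf₁ : ∀ l : ℝ, f₁ l = 1 + X * (1 + Y * l) ^ (-(α / 2)))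
    (hf₂ : ∀ l : ℝ, f₂ l = 1 + Z * l ^ (-(α / 2)))
    (hF : ∀ l : ℝ, F l = l * Real.log (f₁ l / f₂ l)) :
    ∃ ls : ℝ, lL < ls ∧ deriv F ls = 0 ∧
      (∀ l : ℝ, l ∈ Set.Ioo lL ls → 0 < deriv F l) ∧
      (∀ l : ℝ, l ∈ Set.Ioi ls → deriv F l < 0) ∧
      StrictMonoOn F (Set.Ioc lL ls) ∧
      StrictAntiOn F (Set.Ici ls) ∧
      (∀ l : ℝ, l ∈ Set.Ioi lL → l ≠ ls → F l < F ls) ∧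
      (∀ l : ℝ, lL < l → deriv F l = 0 → l = ls) := by
  have hc : 1 < α / 2 := by linarith
  have h2α : 2 / α = (α / 2)⁻¹ := (inv_div α 2).symm
  have hYq : Y < (X / Z) ^ (2 / α) := by
    rw [h2α]
    exact (lt_rpow_inv_iff_of_pos hY.le (by positivity) (by linarith)).2
      ((lt_div_iff₀ hZ).2 (by linarith))
  have hlL₀ : 0 < lL := hlL ▸ one_div_pos.2 (sub_pos.2 hYq)
  have hlLc : (1 / lL + Y) ^ (α / 2) = X / Z := by
    rw [hlL, one_div_one_div, sub_add_cancel, h2α, rpow_inv_rpow (by positivity) (by linarith)]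
  obtain rfl : F = SecrecyThroughput.F (α / 2) X Y Z := funext fun l => by rw [hF, hf₁, hf₂]; rfl
  have hd : ∀ l ∈ Ioi lL, HasDerivAt (SecrecyThroughput.F (α / 2) X Y Z)
      (SecrecyThroughput.dF (α / 2) X Y Z l) l := fun l hl =>
    SecrecyThroughput.hasDerivAt_F hX hY.le hZ (hlL₀.trans hl)
  obtain ⟨ls, hlLls, hls, hpos, hneg⟩ :=
    SecrecyThroughput.exists_dF_sign_change hc hX hY hZ hlL₀ hlLc
  have hpos' : ∀ l ∈ Ioo lL ls, 0 < deriv (SecrecyThroughput.F (α / 2) X Y Z) l :=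
    fun l hl => (hd l hl.1).deriv ▸ hpos l hl
  have hneg' : ∀ l ∈ Ioi ls, deriv (SecrecyThroughput.F (α / 2) X Y Z) l < 0 :=
    fun l hl => (hd l (hlLls.trans hl)).deriv ▸ hneg l hl
  obtain ⟨hmono, hanti, hmax, huniq⟩ := strictMonoOn_strictAntiOn_of_deriv_sign hlLls
    (fun l hl => (hd l hl).differentiableAt) hpos' hneg'
  exact ⟨ls, hlLls, (hd ls hlLls).deriv ▸ hls, hpos', hneg', hmono, hanti, hmax, huniq⟩
end
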